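/- arXiv:2511.09902 — 4 statements merged into one kernel-verified Lean document; each statement's English description precedes it below -/
import Mathlib

section
/- There exists an integer T > 1 such that ℋ_d^{T,0}([0,1]^d) is non-empty; concretely, there exist Lipschitz vector fields V and W on ℝ², compactly supported in [0,1]², such that the composition Flow(V) ∘ Flow(W) is not the time-1 flow of any Lipschitz vector field compactly supported in [0,1]². -/
open Metric Set Function Filter Topology

noncomputable section

/-- `f` equals the identity outside `S` (supported† on `S`). -/
def SuppDaggerOn {E : Type*} (f : E → E) (S : Set E) : Prop := ∀ x, x ∉ S → f x = x

/-- `V` vanishes outside `S`. -/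
def ZeroOutside {E F : Type*} [Zero F] (V : E → F) (S : Set E) : Prop := ∀ x, x ∉ S → V x = 0

/-- `φ` is the time-1 solution map of the autonomous ODE `ẋ_t = V (x_t)`:
for every initial condition `x` there is a solution curve starting at `x`
whose time-1 value is `φ x`. -/
def IsTime1Flow {E : Type*} [NormedAddCommGroup E] [NormedSpace ℝ E]
    (V : E → E) (φ : E → E) : Prop :=
  ∀ x : E, ∃ γ : ℝ → E, γ 0 = x ∧ (∀ t : ℝ, HasDerivAt γ (V (γ t)) t) ∧ γ 1 = φ x

/-- `compFlows ψ T = ψ (T-1) ∘ ⋯ ∘ ψ 0`. -/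
def compFlows {E : Type*} (ψ : ℕ → E → E) : ℕ → E → E
  | 0 => id
  | T + 1 => ψ T ∘ compFlows ψ T

/-- Orientation preserving: homotopic to the identity. -/
def HomotopicToId {E : Type*} [TopologicalSpace E] (φ : E → E) : Prop :=
  ∃ f : C(E, E), ⇑f = φ ∧ f.Homotopic (ContinuousMap.id E)

/-- The closed unit cube `[0,1]^d`. -/
def cube01 (d : ℕ) : Set (Fin d → ℝ) := Set.univ.pi fun _ => Set.Icc (0:ℝ) 1

/-- The open unit cube `(0,1)^d`. -/
def cube01open (d : ℕ) : Set (Fin d → ℝ) := Set.univ.pi fun _ => Set.Ioo (0:ℝ) 1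

/-- The ReLU activation. -/
def relu (x : ℝ) : ℝ := max x 0

open scoped Classical in
/-- Number of nonzero entries of a matrix. -/
noncomputable def nnzM {m n : ℕ} (W : Matrix (Fin m) (Fin n) ℝ) : ℕ :=
  (Finset.univ.filter fun p : Fin m × Fin n => W p.1 p.2 ≠ 0).card

open scoped Classical in
/-- Number of nonzero entries of a vector. -/
noncomputable def nnzV {m : ℕ} (b : Fin m → ℝ) : ℕ :=
  (Finset.univ.filter fun i : Fin m => b i ≠ 0).card

/-- `MLPRep σ depth width params n m f`: the map `f : ℝ^n → ℝ^m` is a σ-MLP with `depth`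
affine layers, all hidden layers of dimension at most `width`, and `params` nonzero
parameters, i.e. `f = L_depth ∘ (σ ∘ L_{depth-1}) ∘ ⋯ ∘ (σ ∘ L_1)` for affine maps `L_l`. -/
inductive MLPRep (σ : ℝ → ℝ) :
    (depth width params n m : ℕ) → ((Fin n → ℝ) → (Fin m → ℝ)) → Prop
  | affine {n m : ℕ} (W : Matrix (Fin m) (Fin n) ℝ) (b : Fin m → ℝ) :
      MLPRep σ 1 0 (nnzM W + nnzV b) n m (fun x => W.mulVec x + b)
  | layer {n k m depth width params : ℕ}
      (W : Matrix (Fin k) (Fin n) ℝ) (b : Fin k → ℝ)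
      {f : (Fin k → ℝ) → (Fin m → ℝ)}
      (hf : MLPRep σ depth width params k m f) :
      MLPRep σ (depth + 1) (max k width) (params + (nnzM W + nnzV b)) n m
        (fun x => f (fun i => σ ((W.mulVec x + b) i)))

/-- `f` is a σ-MLP (of some depth, width and parameter count). -/
def IsMLP (σ : ℝ → ℝ) {n m : ℕ} (f : (Fin n → ℝ) → (Fin m → ℝ)) : Prop :=
  ∃ depth width params, MLPRep σ depth width params n m f

/-- `φ` is a composition of `T` time-1 flows of Lipschitz vector fields supported in `[0,1]^d`. -/
def RepByLipFlows (d T : ℕ) (φ : (Fin d → ℝ) → (Fin d → ℝ)) : Prop :=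
  ∃ V : ℕ → ((Fin d → ℝ) → (Fin d → ℝ)),
    (∀ t < T, (∃ K : NNReal, LipschitzWith K (V t)) ∧ ZeroOutside (V t) (cube01 d)) ∧
    ∃ ψ : ℕ → ((Fin d → ℝ) → (Fin d → ℝ)),
      (∀ t < T, IsTime1Flow (V t) (ψ t)) ∧ φ = compFlows ψ T

/-!
A twist map, rotating each circle about a centre `c` by an angle `ω(|x - c|)`, is the time-1 flow
of the Lipschitz field `ω(|x - c|) J (x - c)` (`J` the quarter turn). Let `R₁` be a quarter-turn
twist about `a` on the circle of radius `1/10` through `p` and `q`, and `R₂` a quarter-turn twist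
about `p` that is the identity near `p`. Then `φ = R₂ ∘ R₁` swaps `p` and `q`, while near `p`
the map `φ ∘ φ` is a composition of three quarter turns, so `p` is an isolated fixed point of
`φ ∘ φ`. If `φ` were the time-1 map of a Lipschitz field, the orbit of `p` would be a connected
set of fixed points of `φ ∘ φ` through `p`, hence `{p}`, contradicting `φ p = q`.
-/

open scoped NNReal
open Real

section Flow

variable {E : Type*} [NormedAddCommGroup E] [NormedSpace ℝ E] {U : E → E} {K : ℝ≥0}

theorem eq_of_hasDerivAt_of_lipschitzWith (hU : LipschitzWith K U) {f g : ℝ → E}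
    (hf : ∀ t, HasDerivAt f (U (f t)) t) (hg : ∀ t, HasDerivAt g (U (g t)) t) {t₀ : ℝ}
    (h : f t₀ = g t₀) : f = g :=
  ODE_solution_unique_univ (v := fun _ => U) (s := fun _ => univ) (fun _ => hU.lipschitzOnWith)
    (fun t => ⟨hf t, trivial⟩) (fun t => ⟨hg t, trivial⟩) h

theorem IsTime1Flow.unique (hU : LipschitzWith K U) {φ ψ : E → E} (hφ : IsTime1Flow U φ)
    (hψ : IsTime1Flow U ψ) : φ = ψ := by
  funext x
  obtain ⟨γ, hγ0, hγ, hγ1⟩ := hφ x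
  obtain ⟨δ, hδ0, hδ, hδ1⟩ := hψ x
  rw [← hγ1, ← hδ1, eq_of_hasDerivAt_of_lipschitzWith hU hγ hδ (hγ0.trans hδ0.symm)]

theorem IsTime1Flow.apply_eq_self_of_isolated (hU : LipschitzWith K U) {ψ : E → E}
    (hψ : IsTime1Flow U ψ) {p : E} (hp : ψ (ψ p) = p)
    (hiso : ∀ᶠ x in 𝓝 p, ψ (ψ x) = x → x = p) : ψ p = p := by
  choose Γ hΓ0 hΓ hΓ1 using hψ
  have shift (x : E) (t : ℝ) : (fun s => Γ x (t + s)) = Γ (Γ x t) :=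
    eq_of_hasDerivAt_of_lipschitzWith hU (t₀ := 0)
      (fun s => by simpa using (hΓ x (t + s)).comp_const_add t s) (hΓ _) (by simp [hΓ0])
  have step (x : E) (t : ℝ) : Γ x (t + 1) = ψ (Γ x t) := by rw [congrFun (shift x t) 1, hΓ1]
  have hΓ2 : Γ p 2 = p := by
    rw [show (2 : ℝ) = 0 + 1 + 1 by norm_num, step, step, hΓ0, hp]
  have periodic (t : ℝ) : ψ (ψ (Γ p t)) = Γ p t := by
    rw [← step, ← step, add_assoc, one_add_one_eq_two, add_comm, congrFun (shift p 2) t, hΓ2]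
  have hcont : Continuous (Γ p) :=
    continuous_iff_continuousAt.2 fun t => (hΓ p t).continuousAt
  have hclopen : IsClopen {t | Γ p t = p} := by
    refine ⟨isClosed_eq hcont continuous_const, isOpen_iff_mem_nhds.2 fun t ht => ?_⟩
    have hiso' : ∀ᶠ x in 𝓝 (Γ p t), ψ (ψ x) = x → x = p := by rwa [show Γ p t = p from ht]
    exact ((hcont.tendsto t).eventually hiso').mono fun s hs => hs (periodic s)
  have h1 : (1 : ℝ) ∈ {t | Γ p t = p} := (hclopen.eq_univ ⟨0, hΓ0 p⟩).symm ▸ mem_univ _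
  rwa [← hΓ1]

end Flow

theorem LipschitzWith.smul_of_bounded_of_support {X F : Type*} [PseudoMetricSpace X]
    [SeminormedAddCommGroup F] [NormedSpace ℝ F] {f : X → ℝ} {g : X → F} {Kf Kg M R : ℝ≥0}
    (hf : LipschitzWith Kf f) (hg : LipschitzWith Kg g) (hfM : ∀ x, |f x| ≤ M)
    (hgR : ∀ x, f x ≠ 0 → ‖g x‖ ≤ R) : LipschitzWith (Kf * R + M * Kg) fun x => f x • g x := by
  have key (x y : X) (hx : f x ≠ 0) :
      dist (f x • g x) (f y • g y) ≤ (Kf * R + M * Kg) * dist x y := by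
    rw [dist_eq_norm, show f x • g x - f y • g y = (f x - f y) • g x + f y • (g x - g y) by
      rw [sub_smul, smul_sub]; abel]
    calc _ ≤ ‖(f x - f y) • g x‖ + ‖f y • (g x - g y)‖ := norm_add_le _ _
      _ = dist (f x) (f y) * ‖g x‖ + |f y| * dist (g x) (g y) := by
        rw [norm_smul, norm_smul, dist_eq_norm, dist_eq_norm, Real.norm_eq_abs (f y)]
      _ ≤ (Kf * dist x y) * R + M * (Kg * dist x y) := by
        gcongr
        exacts [hf.dist_le_mul x y, hgR x hx, hfM y, hg.dist_le_mul x y]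
      _ = (Kf * R + M * Kg) * dist x y := by ring
  refine LipschitzWith.of_dist_le_mul fun x y => ?_
  by_cases hx : f x = 0
  · by_cases hy : f y = 0
    · simp only [hx, hy, zero_smul, dist_self]
      positivity
    · rw [dist_comm, dist_comm x]
      exact key y x hy
  · exact key x y hx

theorem le_dist_of_notMem_cube01 {d : ℕ} {x c : Fin d → ℝ} {r : ℝ}
    (hc : ∀ i, c i ∈ Icc r (1 - r)) (hx : x ∉ cube01 d) : r ≤ dist x c := by
  simp only [cube01, mem_univ_pi, not_forall, mem_Icc, not_and_or, not_le] at hx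
  obtain ⟨i, hi⟩ := hx
  refine le_trans ?_ (dist_le_pi_dist x c i)
  rw [Real.dist_eq, le_abs]
  rcases hi with hi | hi
  · exact Or.inr (by linarith [(hc i).1])
  · exact Or.inl (by linarith [(hc i).2])

/-- The Euclidean distance: the metric of `Fin 2 → ℝ` itself is the sup metric. -/
def euclDist (x y : Fin 2 → ℝ) : ℝ := dist (WithLp.toLp 2 x) (WithLp.toLp 2 y)

theorem euclDist_eq (x y : Fin 2 → ℝ) :
    euclDist x y = √((x 0 - y 0) ^ 2 + (x 1 - y 1) ^ 2) := by
  simp [euclDist, EuclideanSpace.dist_eq, Fin.sum_univ_two, Real.dist_eq, sq_abs]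

theorem dist_le_euclDist (x y : Fin 2 → ℝ) : dist x y ≤ euclDist x y := by
  simpa [euclDist] using (PiLp.lipschitzWith_ofLp 2 fun _ : Fin 2 => ℝ).dist_le_mul
    (WithLp.toLp 2 x) (WithLp.toLp 2 y)

theorem euclDist_le (x y : Fin 2 → ℝ) : euclDist x y ≤ 2 * dist x y := by
  have h := (PiLp.lipschitzWith_toLp 2 fun _ : Fin 2 => ℝ).dist_le_mul x y
  simp only [Fintype.card_fin, Nat.cast_ofNat, one_div, ENNReal.toReal_inv, ENNReal.toReal_ofNat,
    NNReal.coe_rpow, NNReal.coe_ofNat] at h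
  exact h.trans (by gcongr; exact Real.rpow_le_self_of_one_le one_le_two (by norm_num))

theorem lipschitzWith_euclDist_left (c : Fin 2 → ℝ) : LipschitzWith 2 (euclDist · c) :=
  LipschitzWith.of_dist_le_mul fun x y => by
    rw [Real.dist_eq]
    exact (abs_dist_sub_le _ _ _).trans (euclDist_le x y)

theorem abs_euclDist_sub_le (x y c : Fin 2 → ℝ) (m : ℝ) :
    |euclDist x c - m| ≤ |euclDist y c - m| + 2 * dist x y := by
  have := (lipschitzWith_euclDist_left c).dist_le_mul x y
  rw [Real.dist_eq, NNReal.coe_ofNat] at this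
  linarith [abs_sub_le (euclDist x c) (euclDist y c) m]

def rotAbout (c : Fin 2 → ℝ) (θ : ℝ) (x : Fin 2 → ℝ) : Fin 2 → ℝ :=
  ![c 0 + cos θ * (x 0 - c 0) - sin θ * (x 1 - c 1),
    c 1 + sin θ * (x 0 - c 0) + cos θ * (x 1 - c 1)]

theorem rotAbout_zero (c x : Fin 2 → ℝ) : rotAbout c 0 x = x := by
  ext i; fin_cases i <;> simp [rotAbout]

theorem rotAbout_self (c : Fin 2 → ℝ) (θ : ℝ) : rotAbout c θ c = c := by
  ext i; fin_cases i <;> simp [rotAbout]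

theorem rotAbout_pi_div_two (c x : Fin 2 → ℝ) :
    rotAbout c (π / 2) x = ![c 0 - (x 1 - c 1), c 1 + (x 0 - c 0)] := by
  simp [rotAbout]

theorem rotAbout_neg_rotAbout (c : Fin 2 → ℝ) (θ : ℝ) (x : Fin 2 → ℝ) :
    rotAbout c (-θ) (rotAbout c θ x) = x := by
  rw [funext_iff, Fin.forall_fin_two]
  simp only [rotAbout, cos_neg, sin_neg, Matrix.cons_val_zero, Matrix.cons_val_one]
  constructor
  · linear_combination (x 0 - c 0) * sin_sq_add_cos_sq θ
  · linear_combination (x 1 - c 1) * sin_sq_add_cos_sq θ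

theorem euclDist_rotAbout (c : Fin 2 → ℝ) (θ : ℝ) (x : Fin 2 → ℝ) :
    euclDist (rotAbout c θ x) c = euclDist x c := by
  simp only [euclDist_eq, rotAbout, Matrix.cons_val_zero, Matrix.cons_val_one]
  congr 1
  linear_combination ((x 0 - c 0) ^ 2 + (x 1 - c 1) ^ 2) * sin_sq_add_cos_sq θ

theorem dist_rotAbout_pi_div_two_le (c x y : Fin 2 → ℝ) :
    dist (rotAbout c (π / 2) x) (rotAbout c (π / 2) y) ≤ dist x y := by
  rw [dist_pi_le_iff dist_nonneg, Fin.forall_fin_two]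
  simp only [rotAbout_pi_div_two, Matrix.cons_val_zero, Matrix.cons_val_one, Real.dist_eq]
  constructor
  · rw [sub_sub_sub_cancel_left, sub_sub_sub_cancel_right, ← Real.dist_eq]
    exact dist_le_pi_dist y x 1 |>.trans_eq (dist_comm y x)
  · rw [add_sub_add_left_eq_sub, sub_sub_sub_cancel_right, ← Real.dist_eq]
    exact dist_le_pi_dist x y 0

theorem hasDerivAt_rotAbout (c x : Fin 2 → ℝ) (θ t : ℝ) :
    HasDerivAt (fun s => rotAbout c (s * θ) x)
      (θ • (rotAbout c (π / 2) (rotAbout c (t * θ) x) - c)) t := by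
  have hcos := (hasDerivAt_cos (t * θ)).comp t (hasDerivAt_mul_const θ)
  have hsin := (hasDerivAt_sin (t * θ)).comp t (hasDerivAt_mul_const θ)
  rw [hasDerivAt_pi, Fin.forall_fin_two, rotAbout_pi_div_two]
  simp only [Pi.smul_apply, Pi.sub_apply, smul_eq_mul, Matrix.cons_val_zero, Matrix.cons_val_one]
  constructor
  · refine (((hcos.mul_const (x 0 - c 0)).const_add (c 0)).sub
      (hsin.mul_const (x 1 - c 1))).congr_deriv ?_
    simp only [rotAbout, Matrix.cons_val_zero, Matrix.cons_val_one]
    ring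
  · refine (((hsin.mul_const (x 0 - c 0)).const_add (c 1)).add
      (hcos.mul_const (x 1 - c 1))).congr_deriv ?_
    simp only [rotAbout, Matrix.cons_val_zero]
    ring

def twistField (c : Fin 2 → ℝ) (ω : ℝ → ℝ) (x : Fin 2 → ℝ) : Fin 2 → ℝ :=
  ω (euclDist x c) • (rotAbout c (π / 2) x - c)

def twistMap (c : Fin 2 → ℝ) (ω : ℝ → ℝ) (x : Fin 2 → ℝ) : Fin 2 → ℝ :=
  rotAbout c (ω (euclDist x c)) x

theorem isTime1Flow_twistField (c : Fin 2 → ℝ) (ω : ℝ → ℝ) :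
    IsTime1Flow (twistField c ω) (twistMap c ω) := fun x =>
  ⟨fun t => rotAbout c (t * ω (euclDist x c)) x, by simp [rotAbout_zero],
    fun t => by simpa only [twistField, euclDist_rotAbout] using hasDerivAt_rotAbout c x _ t,
    by simp [twistMap]⟩

theorem continuous_twistMap (c : Fin 2 → ℝ) {ω : ℝ → ℝ} (hω : Continuous ω) :
    Continuous (twistMap c ω) := by
  have : Continuous (euclDist · c) := (lipschitzWith_euclDist_left c).continuous
  unfold twistMap rotAbout
  fun_prop

def twistHomeomorph (c : Fin 2 → ℝ) {ω : ℝ → ℝ} (hω : Continuous ω) :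
    (Fin 2 → ℝ) ≃ₜ (Fin 2 → ℝ) where
  toFun := twistMap c ω
  invFun := twistMap c (-ω)
  left_inv x := by simp [twistMap, euclDist_rotAbout, rotAbout_neg_rotAbout]
  right_inv x := by
    simpa [twistMap, euclDist_rotAbout] using rotAbout_neg_rotAbout c (-ω (euclDist x c)) x
  continuous_toFun := continuous_twistMap c hω
  continuous_invFun := continuous_twistMap c hω.neg

theorem exists_lipschitzWith_twistField (c : Fin 2 → ℝ) {ω : ℝ → ℝ} {L : ℝ≥0} {M R : ℝ}
    (hω : LipschitzWith L ω) (hM : ∀ r, |ω r| ≤ M) (hR : ∀ r, R ≤ r → ω r = 0) :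
    ∃ K, LipschitzWith K (twistField c ω) := by
  refine ⟨_, LipschitzWith.smul_of_bounded_of_support (M := M.toNNReal) (R := R.toNNReal)
    (hω.comp (lipschitzWith_euclDist_left c))
    ((LipschitzWith.mk_one (dist_rotAbout_pi_div_two_le c)).sub (LipschitzWith.const c))
    (fun x => (hM _).trans (le_coe_toNNReal M)) fun x hx => ?_⟩
  calc ‖rotAbout c (π / 2) x - c‖ = dist (rotAbout c (π / 2) x) (rotAbout c (π / 2) c) := by
        rw [rotAbout_self, dist_eq_norm]
    _ ≤ dist x c := dist_rotAbout_pi_div_two_le c x c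
    _ ≤ euclDist x c := dist_le_euclDist x c
    _ ≤ R := (not_le.1 (mt (hR _) hx)).le
    _ ≤ R.toNNReal := le_coe_toNNReal R

def quarterBump (m r : ℝ) : ℝ := π / 2 * max 0 (min 1 (2 - 100 * |r - m|))

theorem lipschitzWith_quarterBump (m : ℝ) : LipschitzWith (‖π / 2‖₊ * 100) (quarterBump m) :=
  (lipschitzWith_smul (π / 2)).comp <| (LipschitzWith.const_min (LipschitzWith.of_le_add_mul 100
    fun r s => by
      rw [Real.dist_eq, NNReal.coe_ofNat]
      linarith [abs_sub_le s r m, abs_sub_comm r s]) 1).const_max 0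

theorem abs_quarterBump_le (m r : ℝ) : |quarterBump m r| ≤ π / 2 := by
  rw [quarterBump, abs_mul, abs_of_pos (by positivity), abs_of_nonneg (le_max_left _ _)]
  exact mul_le_of_le_one_right (by positivity) (max_le zero_le_one (min_le_left _ _))

theorem quarterBump_of_abs_le {m r : ℝ} (h : |r - m| ≤ 1 / 100) : quarterBump m r = π / 2 := by
  rw [quarterBump, min_eq_left (by linarith), max_eq_right zero_le_one, mul_one]

theorem quarterBump_of_le_abs {m r : ℝ} (h : 1 / 50 ≤ |r - m|) : quarterBump m r = 0 := by
  rw [quarterBump, min_eq_right (by linarith), max_eq_left (by linarith), mul_zero]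

theorem exists_lipschitzWith_twistField_quarterBump (c : Fin 2 → ℝ) (m : ℝ) :
    ∃ K, LipschitzWith K (twistField c (quarterBump m)) :=
  exists_lipschitzWith_twistField c (lipschitzWith_quarterBump m) (abs_quarterBump_le m)
    (R := m + 1 / 50) fun _ hr => quarterBump_of_le_abs (le_abs.2 (Or.inl (by linarith)))

theorem twistMap_quarterBump_of_abs_le {c x : Fin 2 → ℝ} {m : ℝ}
    (h : |euclDist x c - m| ≤ 1 / 100) :
    twistMap c (quarterBump m) x = rotAbout c (π / 2) x := by
  rw [twistMap, quarterBump_of_abs_le h]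

theorem twistMap_quarterBump_of_le_abs {c x : Fin 2 → ℝ} {m : ℝ}
    (h : 1 / 50 ≤ |euclDist x c - m|) : twistMap c (quarterBump m) x = x := by
  rw [twistMap, quarterBump_of_le_abs h, rotAbout_zero]

theorem le_abs_euclDist_sub_of_notMem_cube01 {c x : Fin 2 → ℝ} {m : ℝ}
    (hc : ∀ i, c i ∈ Icc (m + 1 / 50) (1 - (m + 1 / 50))) (hx : x ∉ cube01 2) :
    1 / 50 ≤ |euclDist x c - m| :=
  le_abs.2 (Or.inl (by linarith [le_dist_of_notMem_cube01 hc hx, dist_le_euclDist x c]))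

theorem zeroOutside_twistField_quarterBump {c : Fin 2 → ℝ} {m : ℝ}
    (hc : ∀ i, c i ∈ Icc (m + 1 / 50) (1 - (m + 1 / 50))) :
    ZeroOutside (twistField c (quarterBump m)) (cube01 2) := fun x hx => by
  rw [twistField, quarterBump_of_le_abs (le_abs_euclDist_sub_of_notMem_cube01 hc hx), zero_smul]

theorem suppDaggerOn_twistMap_quarterBump {c : Fin 2 → ℝ} {m : ℝ}
    (hc : ∀ i, c i ∈ Icc (m + 1 / 50) (1 - (m + 1 / 50))) :
    SuppDaggerOn (twistMap c (quarterBump m)) (cube01 2) := fun _ hx =>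
  twistMap_quarterBump_of_le_abs (le_abs_euclDist_sub_of_notMem_cube01 hc hx)

theorem SuppDaggerOn.comp {E : Type*} {f g : E → E} {S : Set E} (hg : SuppDaggerOn g S)
    (hf : SuppDaggerOn f S) : SuppDaggerOn (g ∘ f) S := fun x hx => by
  rw [Function.comp_apply, hf x hx, hg x hx]

theorem homotopicToId_of_continuous {E : Type*} [AddCommGroup E] [TopologicalSpace E]
    [IsTopologicalAddGroup E] [Module ℝ E] [ContinuousSMul ℝ E] {f : E → E} (hf : Continuous f) :
    HomotopicToId f :=
  ⟨⟨f, hf⟩, rfl, ⟨ContinuousMap.Homotopy.affine _ _⟩⟩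

section Representations

variable {d : ℕ}

theorem repByLipFlows_two {V₁ V₂ φ₁ φ₂ : (Fin d → ℝ) → (Fin d → ℝ)}
    (hV₁ : ∃ K, LipschitzWith K V₁) (hV₁0 : ZeroOutside V₁ (cube01 d)) (hφ₁ : IsTime1Flow V₁ φ₁)
    (hV₂ : ∃ K, LipschitzWith K V₂) (hV₂0 : ZeroOutside V₂ (cube01 d)) (hφ₂ : IsTime1Flow V₂ φ₂) :
    RepByLipFlows d 2 (φ₂ ∘ φ₁) := by
  refine ⟨![V₁, V₂] ∘ Fin.ofNat 2, fun t ht => ?_, ![φ₁, φ₂] ∘ Fin.ofNat 2, fun t ht => ?_, rfl⟩ <;>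
    interval_cases t
  exacts [⟨hV₁, hV₁0⟩, ⟨hV₂, hV₂0⟩, hφ₁, hφ₂]

theorem not_repByLipFlows_one {φ : (Fin d → ℝ) → (Fin d → ℝ)}
    (hφ : ∀ (U : (Fin d → ℝ) → (Fin d → ℝ)) (K : ℝ≥0), LipschitzWith K U → ¬ IsTime1Flow U φ) :
    ¬ RepByLipFlows d 1 φ := by
  rintro ⟨V, hV, ψ, hψ, rfl⟩
  obtain ⟨⟨K, hK⟩, -⟩ := hV 0 one_pos
  exact hφ (V 0) K hK (hψ 0 one_pos)

end Representations

namespace TwistExample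

def a : Fin 2 → ℝ := ![3 / 10, 1 / 2]
def p : Fin 2 → ℝ := ![2 / 5, 1 / 2]
def q : Fin 2 → ℝ := ![3 / 10, 2 / 5]

/- `p` and `q` lie at distance `1/10` from `a`, and `R₁ p` at distance `√2/10 ≈ 0.1414` from `p`:
inside the plateaus `|r - 1/10| ≤ 1/100` of `R₁` and `|r - 7/50| ≤ 1/100` of `R₂`, while `R₂`
is the identity on `|x - p| ≤ 3/25`. -/
def X₁ : (Fin 2 → ℝ) → (Fin 2 → ℝ) := twistField a (quarterBump (1 / 10))
def X₂ : (Fin 2 → ℝ) → (Fin 2 → ℝ) := twistField p (quarterBump (7 / 50))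
def R₁ : (Fin 2 → ℝ) → (Fin 2 → ℝ) := twistMap a (quarterBump (1 / 10))
def R₂ : (Fin 2 → ℝ) → (Fin 2 → ℝ) := twistMap p (quarterBump (7 / 50))
def phi : (Fin 2 → ℝ) → (Fin 2 → ℝ) := R₂ ∘ R₁

theorem euclDist_p_a : euclDist p a = 1 / 10 := by
  rw [euclDist_eq, Real.sqrt_eq_iff_mul_self_eq_of_pos (by norm_num)]
  norm_num [p, a]

theorem euclDist_q_a : euclDist q a = 1 / 10 := by
  rw [euclDist_eq, Real.sqrt_eq_iff_mul_self_eq_of_pos (by norm_num)]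
  norm_num [q, a]

theorem rotAbout_a_q : rotAbout a (π / 2) q = p := by
  rw [rotAbout_pi_div_two]; ext i; fin_cases i <;> norm_num [a, p, q]

theorem rotAbout_p_rotAbout_a_p : rotAbout p (π / 2) (rotAbout a (π / 2) p) = q := by
  rw [rotAbout_pi_div_two, rotAbout_pi_div_two]; ext i; fin_cases i <;> norm_num [a, p, q]

theorem abs_euclDist_rotAbout_a_p_sub_le :
    |euclDist (rotAbout a (π / 2) p) p - 7 / 50| ≤ 1 / 500 := by
  have h : euclDist (rotAbout a (π / 2) p) p = √(1 / 50) := by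
    rw [euclDist_eq, rotAbout_pi_div_two]; norm_num [a, p]
  rw [h, abs_le]
  constructor
  · linarith [Real.le_sqrt_of_sq_le (show (7 / 50 : ℝ) ^ 2 ≤ 1 / 50 by norm_num)]
  · linarith [(Real.sqrt_le_left (by norm_num : (0 : ℝ) ≤ 71 / 500)).2
      (show (1 / 50 : ℝ) ≤ (71 / 500) ^ 2 by norm_num)]

theorem phi_of_dist_p_le {x : Fin 2 → ℝ} (hx : dist x p ≤ 1 / 1000) :
    phi x = rotAbout p (π / 2) (rotAbout a (π / 2) x) := by
  have hR₁ : R₁ x = rotAbout a (π / 2) x := twistMap_quarterBump_of_abs_le <| by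
    have := abs_euclDist_sub_le x p a (1 / 10)
    rw [euclDist_p_a, sub_self, abs_zero] at this
    linarith
  have hR₂ : R₂ (rotAbout a (π / 2) x) = rotAbout p (π / 2) (rotAbout a (π / 2) x) :=
    twistMap_quarterBump_of_abs_le <| by
      linarith [abs_euclDist_sub_le (rotAbout a (π / 2) x) (rotAbout a (π / 2) p) p (7 / 50),
        abs_euclDist_rotAbout_a_p_sub_le, dist_rotAbout_pi_div_two_le a x p]
  rw [phi, Function.comp_apply, hR₁, hR₂]

theorem phi_of_dist_q_le {x : Fin 2 → ℝ} (hx : dist x q ≤ 1 / 1000) :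
    phi x = rotAbout a (π / 2) x := by
  have hR₁ : R₁ x = rotAbout a (π / 2) x := twistMap_quarterBump_of_abs_le <| by
    have := abs_euclDist_sub_le x q a (1 / 10)
    rw [euclDist_q_a, sub_self, abs_zero] at this
    linarith
  have hR₂ : R₂ (rotAbout a (π / 2) x) = rotAbout a (π / 2) x :=
    twistMap_quarterBump_of_le_abs <| le_abs.2 <| Or.inr <| by
      linarith [euclDist_le (rotAbout a (π / 2) x) p,
        rotAbout_a_q ▸ dist_rotAbout_pi_div_two_le a x q]
  rw [phi, Function.comp_apply, hR₁, hR₂]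

theorem phi_p : phi p = q := by
  rw [phi_of_dist_p_le (by simp), rotAbout_p_rotAbout_a_p]

theorem phi_q : phi q = p := by
  rw [phi_of_dist_q_le (by simp), rotAbout_a_q]

theorem p_ne_q : p ≠ q := fun h => by norm_num [p, q] at h

theorem eq_p_of_phi_phi {x : Fin 2 → ℝ} (hx : dist x p ≤ 1 / 1000) (h : phi (phi x) = x) :
    x = p := by
  have hq : dist (phi x) q ≤ 1 / 1000 := by
    rw [phi_of_dist_p_le hx, ← rotAbout_p_rotAbout_a_p]
    exact (dist_rotAbout_pi_div_two_le _ _ _).trans ((dist_rotAbout_pi_div_two_le _ _ _).trans hx)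
  rw [phi_of_dist_q_le hq, phi_of_dist_p_le hx] at h
  have h0 := congrFun h 0
  have h1 := congrFun h 1
  simp only [a, p, rotAbout_pi_div_two, Matrix.cons_val_zero, Matrix.cons_val_one] at h0 h1
  rw [funext_iff, Fin.forall_fin_two]
  simp only [p, Matrix.cons_val_zero, Matrix.cons_val_one]
  constructor <;> linarith

theorem not_isTime1Flow_phi {U : (Fin 2 → ℝ) → (Fin 2 → ℝ)} {K : ℝ≥0} (hU : LipschitzWith K U) :
    ¬ IsTime1Flow U phi := fun h =>
  p_ne_q <| (h.apply_eq_self_of_isolated hU (by rw [phi_p, phi_q]) <|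
    Filter.eventually_of_mem (closedBall_mem_nhds p (by norm_num))
      fun _ hx => eq_p_of_phi_phi hx).symm.trans phi_p

theorem zeroOutside_X₁ : ZeroOutside X₁ (cube01 2) :=
  zeroOutside_twistField_quarterBump fun i => by fin_cases i <;> norm_num [a]

theorem zeroOutside_X₂ : ZeroOutside X₂ (cube01 2) :=
  zeroOutside_twistField_quarterBump fun i => by fin_cases i <;> norm_num [p]

theorem suppDaggerOn_phi : SuppDaggerOn phi (cube01 2) :=
  (suppDaggerOn_twistMap_quarterBump fun i => by fin_cases i <;> norm_num [p]).comp
    (suppDaggerOn_twistMap_quarterBump fun i => by fin_cases i <;> norm_num [a])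

def phiHomeomorph : (Fin 2 → ℝ) ≃ₜ (Fin 2 → ℝ) :=
  (twistHomeomorph a (lipschitzWith_quarterBump (1 / 10)).continuous).trans
    (twistHomeomorph p (lipschitzWith_quarterBump (7 / 50)).continuous)

theorem coe_phiHomeomorph : ⇑phiHomeomorph = phi := rfl

theorem repByLipFlows_two_phi : RepByLipFlows 2 2 phi :=
  repByLipFlows_two (exists_lipschitzWith_twistField_quarterBump _ _) zeroOutside_X₁
    (isTime1Flow_twistField _ _) (exists_lipschitzWith_twistField_quarterBump _ _) zeroOutside_X₂
    (isTime1Flow_twistField _ _)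

end TwistExample

open TwistExample in
/-- **Statement 4.** There is `T > 1` with `ℋ_d^{T,0}([0,1]^d)` non-empty: concretely, there are
Lipschitz vector fields `V, W` on `ℝ²` supported in `[0,1]²` whose time-1 flows compose to a map
that is not the time-1 flow of any Lipschitz vector field supported in `[0,1]²`. -/
theorem incremental_nontrivial :
    (∃ T : ℕ, 1 < T ∧ ∃ φ : (Fin 2 → ℝ) → (Fin 2 → ℝ),
      (∃ h : Homeomorph (Fin 2 → ℝ) (Fin 2 → ℝ), ⇑h = φ) ∧ HomotopicToId φ ∧
      SuppDaggerOn φ (cube01 2) ∧ RepByLipFlows 2 T φ ∧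
      ∀ T' : ℕ, 0 < T' → T' < T → ¬ RepByLipFlows 2 T' φ) ∧
    ∃ V W : (Fin 2 → ℝ) → (Fin 2 → ℝ),
      (∃ K : NNReal, LipschitzWith K V) ∧ ZeroOutside V (cube01 2) ∧
      (∃ K : NNReal, LipschitzWith K W) ∧ ZeroOutside W (cube01 2) ∧
      ∀ φV φW : (Fin 2 → ℝ) → (Fin 2 → ℝ),
        IsTime1Flow V φV → IsTime1Flow W φW →
        ¬ ∃ U : (Fin 2 → ℝ) → (Fin 2 → ℝ),
            (∃ K : NNReal, LipschitzWith K U) ∧ ZeroOutside U (cube01 2) ∧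
            IsTime1Flow U (φV ∘ φW) := by
  obtain ⟨K₁, hK₁⟩ := exists_lipschitzWith_twistField_quarterBump a (1 / 10)
  obtain ⟨K₂, hK₂⟩ := exists_lipschitzWith_twistField_quarterBump p (7 / 50)
  refine ⟨⟨2, one_lt_two, phi, ⟨phiHomeomorph, coe_phiHomeomorph⟩,
    homotopicToId_of_continuous (coe_phiHomeomorph ▸ phiHomeomorph.continuous), suppDaggerOn_phi,
    repByLipFlows_two_phi, fun T' hT'0 hT'2 => ?_⟩,
    X₂, X₁, ⟨K₂, hK₂⟩, zeroOutside_X₂, ⟨K₁, hK₁⟩, zeroOutside_X₁, ?_⟩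
  · obtain rfl : T' = 1 := by omega
    exact not_repByLipFlows_one fun _ _ hU => not_isTime1Flow_phi hU
  · rintro φV φW hφV hφW ⟨U, ⟨K, hU⟩, -, hUφ⟩
    rw [hφV.unique hK₂ (isTime1Flow_twistField _ _), hφW.unique hK₁ (isTime1Flow_twistField _ _)]
      at hUφ
    exact not_isTime1Flow_phi hU hUφ
end
end

section
/- Let d, D ∈ ℕ₊, L ≥ 0, and let f : ℝ^d → ℝ^D be L-Lipschitz. For every n ∈ ℕ₊ and each i ∈ {1,…,D} there exist Lipschitz ReLU MLP vector fields Φ_i : ℝ^{d+1} → ℝ^{d+1}, of width O(d n^{d+1}), depth O(log₂ d), and with O(d n^{d+1}) non-zero parameters, such that, setting Ψ_i = Flow(Φ_i) and Ψ(x) = ( π(Ψ_1(x,0)), …, π(Ψ_D(x,0)) ) where π : ℝ^{d+1} → ℝ is the projection onto the last coordinate, the map Ψ is Lipschitz and satisfies sup_{x ∈ [0,1]^d} ‖f(x) − Ψ(x)‖_{ℓ∞} = O(1/n). -/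
open Metric Set Function Filter Topology

noncomputable section

/-- The linear embedding `ι : ℝ^d → ℝ^{d+1}`, `x ↦ (x, 0)`. -/
def liftEmb {d : ℕ} (x : Fin d → ℝ) : Fin (d + 1) → ℝ := Fin.snoc x 0

/-- The projection `π : ℝ^{d+1} → ℝ` onto the last coordinate. -/
def lastProj {d : ℕ} (z : Fin (d + 1) → ℝ) : ℝ := z (Fin.last d)

namespace NF



lemma relu_nonneg (x : ℝ) : 0 ≤ relu x := le_max_right _ _
lemma relu_of_nonneg {x : ℝ} (h : 0 ≤ x) : relu x = x := max_eq_left h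
lemma relu_of_nonpos {x : ℝ} (h : x ≤ 0) : relu x = 0 := max_eq_right h

/-- partial max: `pm f k = max (0, f 0, ..., f (k-1))`. -/
def pm (f : ℕ → ℝ) : ℕ → ℝ
  | 0 => 0
  | k + 1 => max (pm f k) (f k)

lemma pm_nonneg (f : ℕ → ℝ) (k : ℕ) : 0 ≤ pm f k := by
  induction k with
  | zero => simp [pm]
  | succ k ih => exact le_trans ih (le_max_left _ _)

lemma pm_le_iff {f : ℕ → ℝ} {m : ℕ} {c : ℝ} :
    pm f m ≤ c ↔ 0 ≤ c ∧ ∀ k < m, f k ≤ c := by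
  induction m with
  | zero => simp [pm]
  | succ m ih =>
    rw [pm, max_le_iff, ih]
    constructor
    · rintro ⟨⟨h0, hk⟩, hm⟩
      refine ⟨h0, fun k hk' => ?_⟩
      rcases Nat.lt_succ_iff_lt_or_eq.1 hk' with h | h
      · exact hk k h
      · simpa [h]
    · rintro ⟨h0, hk⟩
      exact ⟨⟨h0, fun k h => hk k (Nat.lt_succ_of_lt h)⟩, hk m (Nat.lt_succ_self m)⟩

lemma pm_lt_iff {f : ℕ → ℝ} {m : ℕ} {c : ℝ} :
    pm f m < c ↔ 0 < c ∧ ∀ k < m, f k < c := by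
  induction m with
  | zero => simp [pm]
  | succ m ih =>
    rw [pm, max_lt_iff, ih]
    constructor
    · rintro ⟨⟨h0, hk⟩, hm⟩
      refine ⟨h0, fun k hk' => ?_⟩
      rcases Nat.lt_succ_iff_lt_or_eq.1 hk' with h | h
      · exact hk k h
      · simpa [h]
    · rintro ⟨h0, hk⟩
      exact ⟨⟨h0, fun k h => hk k (Nat.lt_succ_of_lt h)⟩, hk m (Nat.lt_succ_self m)⟩

lemma pm_congr {f g : ℕ → ℝ} {m : ℕ} (h : ∀ k < m, f k = g k) : pm f m = pm g m := by
  induction m with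
  | zero => rfl
  | succ m ih =>
    rw [pm, pm, ih (fun k hk => h k (Nat.lt_succ_of_lt hk)), h m (Nat.lt_succ_self m)]

variable {d n : ℕ}

/-- The interval `(aq, bq]` attached to grid point `q` and data `y`. -/
def aq (q : Fin d → Fin (n+1)) (y : ℕ → ℝ) : ℝ :=
  pm (fun k => if h : k < d then (q ⟨k, h⟩ : ℝ) - y k else 0) d

def bq (q : Fin d → Fin (n+1)) (y : ℕ → ℝ) : ℝ :=
  1 - pm (fun k => if h : k < d then y k - (q ⟨k, h⟩ : ℝ) else 0) d

lemma mem_Ioc_aq_bq {q : Fin d → Fin (n+1)} {y : ℕ → ℝ} {t : ℝ} :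
    t ∈ Set.Ioc (aq q y) (bq q y) ↔
      (0 < t ∧ t ≤ 1) ∧ ∀ k : Fin d, y k.1 + t - 1 ≤ (q k : ℝ) ∧ (q k : ℝ) < y k.1 + t := by
  constructor
  · rintro ⟨h1, h2⟩
    rw [aq, pm_lt_iff] at h1
    rw [bq, le_sub_iff_add_le', ← le_sub_iff_add_le, pm_le_iff] at h2
    refine ⟨⟨h1.1, by linarith [h2.1]⟩, fun k => ?_⟩
    have hk := h1.2 k.1 k.2
    have hk2 := h2.2 k.1 k.2
    rw [dif_pos k.2] at hk hk2
    constructor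
    · have : y k.1 - (q ⟨k.1, k.2⟩ : ℝ) ≤ 1 - t := hk2
      simp only [Fin.eta] at this hk ⊢
      linarith
    · simp only [Fin.eta] at hk ⊢; linarith
  · rintro ⟨⟨h0, h1⟩, hk⟩
    constructor
    · rw [aq, pm_lt_iff]
      refine ⟨h0, fun k hkd => ?_⟩
      rw [dif_pos hkd]
      have := (hk ⟨k, hkd⟩).2
      simpa using by linarith
    · rw [bq, le_sub_iff_add_le', ← le_sub_iff_add_le, pm_le_iff]
      refine ⟨by linarith, fun k hkd => ?_⟩
      rw [dif_pos hkd]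
      have := (hk ⟨k, hkd⟩).1
      simpa using by linarith

/-- Partition of unity. -/
lemma partition (hd : 0 < d) (y : ℕ → ℝ) (hy : ∀ k < d, y k ∈ Set.Icc (0:ℝ) n) :
    ∑ q : Fin d → Fin (n+1), relu (bq q y - aq q y) = 1 := by
  classical
  -- identify each term with the volume of the interval
  have hterm : ∀ q : Fin d → Fin (n+1),
      relu (bq q y - aq q y) = (MeasureTheory.volume (Set.Ioc (aq q y) (bq q y))).toReal := by
    intro q
    rw [Real.volume_Ioc]
    rcases le_or_gt (bq q y - aq q y) 0 with h | h
    · rw [relu_of_nonpos h, ENNReal.ofReal_of_nonpos h]; simp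
    · rw [relu_of_nonneg h.le, ENNReal.toReal_ofReal h.le]
  -- disjointness
  have hdisj : (Set.univ : Set (Fin d → Fin (n+1))).PairwiseDisjoint
      (fun q => Set.Ioc (aq q y) (bq q y)) := by
    intro q _ q' _ hne
    rw [Function.onFun, Set.disjoint_left]
    intro t ht ht'
    apply hne
    funext k
    have h1 := (mem_Ioc_aq_bq.1 ht).2 k
    have h2 := (mem_Ioc_aq_bq.1 ht').2 k
    have h5 : ((q k : ℕ) : ℝ) < ((q' k : ℕ) : ℝ) + 1 := by linarith [h1.2, h2.1]
    have h6 : ((q' k : ℕ) : ℝ) < ((q k : ℕ) : ℝ) + 1 := by linarith [h2.2, h1.1]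
    have h5' : (q k : ℕ) < (q' k : ℕ) + 1 := by exact_mod_cast h5
    have h6' : (q' k : ℕ) < (q k : ℕ) + 1 := by exact_mod_cast h6
    exact Fin.ext (by omega)
  -- union
  have hunion : (⋃ q ∈ (Finset.univ : Finset (Fin d → Fin (n+1))),
      Set.Ioc (aq q y) (bq q y)) = Set.Ioc (0:ℝ) 1 := by
    apply Set.Subset.antisymm
    · intro t ht
      simp only [Set.mem_iUnion] at ht
      obtain ⟨q, _, ht⟩ := ht
      have := mem_Ioc_aq_bq.1 ht
      exact ⟨this.1.1, this.1.2⟩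
    · intro t ht
      obtain ⟨ht0, ht1⟩ := ht
      -- construct q
      have hqk : ∀ k : Fin d, ∃ m : Fin (n+1), y k.1 + t - 1 ≤ (m : ℝ) ∧ (m : ℝ) < y k.1 + t := by
        intro k
        obtain ⟨hy0, hyn⟩ := hy k.1 k.2
        set c : ℤ := ⌈y k.1 + t - 1⌉ with hc
        have hc1 : (c : ℝ) ≥ y k.1 + t - 1 := Int.le_ceil _
        have hc2 : (c : ℝ) < y k.1 + t := by
          calc (c:ℝ) < (y k.1 + t - 1) + 1 := Int.ceil_lt_add_one _
          _ = y k.1 + t := by ring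
        have hcn : c ≤ n := by
          have : (c : ℝ) < (n:ℝ) + 1 := by linarith
          exact_mod_cast Int.lt_add_one_iff.1 (by exact_mod_cast this)
        have hc0 : 0 ≤ c := by
          have : (-1 : ℝ) < (c:ℝ) := by linarith
          have : (-1 : ℤ) < c := by exact_mod_cast this
          omega
        have hcast : ((c.toNat : ℕ) : ℝ) = (c : ℝ) := by
          rw [← Int.cast_natCast, Int.toNat_of_nonneg hc0]
        refine ⟨⟨c.toNat, ?_⟩, ?_, ?_⟩
        · omega
        · rw [hcast]; exact hc1
        · rw [hcast]; exact hc2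
      choose q hq1 hq2 using hqk
      simp only [Set.mem_iUnion]
      exact ⟨q, Finset.mem_univ q, mem_Ioc_aq_bq.2 ⟨⟨ht0, ht1⟩, fun k => ⟨hq1 k, hq2 k⟩⟩⟩
  calc ∑ q : Fin d → Fin (n+1), relu (bq q y - aq q y)
      = ∑ q : Fin d → Fin (n+1), (MeasureTheory.volume (Set.Ioc (aq q y) (bq q y))).toReal := by
        exact Finset.sum_congr rfl fun q _ => hterm q
    _ = (∑ q : Fin d → Fin (n+1), MeasureTheory.volume (Set.Ioc (aq q y) (bq q y))).toReal := by
        rw [ENNReal.toReal_sum]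
        intro q _
        rw [Real.volume_Ioc]; exact ENNReal.ofReal_ne_top
    _ = (MeasureTheory.volume (Set.Ioc (0:ℝ) 1)).toReal := by
        rw [← MeasureTheory.measure_biUnion_finset (by rw [Finset.coe_univ]; exact hdisj) (fun q _ => measurableSet_Ioc), hunion]
    _ = 1 := by rw [Real.volume_Ioc]; simp

lemma mlp_congr {σ : ℝ → ℝ} {depth width params n m : ℕ}
    {f g : (Fin n → ℝ) → (Fin m → ℝ)} (h : MLPRep σ depth width params n m f)
    (hfg : ∀ x, f x = g x) : MLPRep σ depth width params n m g := by
  rwa [show g = f from (funext hfg).symm]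

/-- State of a chain of relu layers. -/
def chainState {n₀ N : ℕ} (Win : Matrix (Fin N) (Fin n₀) ℝ) (bin : Fin N → ℝ)
    (W : ℕ → Matrix (Fin N) (Fin N) ℝ) (b : ℕ → Fin N → ℝ) :
    ℕ → (Fin n₀ → ℝ) → (Fin N → ℝ)
  | 0, x => fun i => relu ((Win.mulVec x + bin) i)
  | k + 1, x => fun i => relu (((W k).mulVec (chainState Win bin W b k x) + b k) i)

lemma chainState_shift {n₀ N : ℕ} (Win : Matrix (Fin N) (Fin n₀) ℝ) (bin : Fin N → ℝ)
    (W : ℕ → Matrix (Fin N) (Fin N) ℝ) (b : ℕ → Fin N → ℝ) (k : ℕ) (x : Fin n₀ → ℝ) :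
    chainState Win bin W b (k + 1) x =
      chainState (W 0) (b 0) (fun j => W (j+1)) (fun j => b (j+1)) k
        (fun i => relu ((Win.mulVec x + bin) i)) := by
  induction k with
  | zero => rfl
  | succ k ih => rw [chainState, ih]; rfl

/-- A chain of `T+1` relu layers followed by an affine output layer is an MLP of
depth `T+2` and width `N`. -/
lemma chain_mlp {n₀ m₀ N : ℕ} (T : ℕ) (Win : Matrix (Fin N) (Fin n₀) ℝ) (bin : Fin N → ℝ)
    (W : ℕ → Matrix (Fin N) (Fin N) ℝ) (b : ℕ → Fin N → ℝ)
    (Wout : Matrix (Fin m₀) (Fin N) ℝ) (bout : Fin m₀ → ℝ) :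
    MLPRep relu (T + 2) N
      ((nnzM Wout + nnzV bout) + (∑ k ∈ Finset.range T, (nnzM (W k) + nnzV (b k)))
        + (nnzM Win + nnzV bin)) n₀ m₀
      (fun x => Wout.mulVec (chainState Win bin W b T x) + bout) := by
  induction T generalizing n₀ Win bin W b with
  | zero =>
    have h := MLPRep.layer (σ := relu) Win bin (MLPRep.affine Wout bout)
    simp only [Finset.range_zero, Finset.sum_empty, Nat.add_zero] at *
    simp only [Nat.max_eq_left (Nat.zero_le N)] at h
    exact mlp_congr h (fun x => rfl)
  | succ T ih =>
    have hins := ih (W 0) (b 0) (fun j => W (j+1)) (fun j => b (j+1))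
    have h := MLPRep.layer (σ := relu) Win bin hins
    rw [Nat.max_self] at h
    have h' := mlp_congr h (g := fun x => Wout.mulVec (chainState Win bin W b (T+1) x) + bout)
      (fun x => by simp only [chainState_shift])
    have hsum : (nnzM Wout + nnzV bout)
        + (∑ k ∈ Finset.range (T+1), (nnzM (W k) + nnzV (b k))) + (nnzM Win + nnzV bin)
        = ((nnzM Wout + nnzV bout) + (∑ k ∈ Finset.range T, (nnzM (W (k+1)) + nnzV (b (k+1))))
          + (nnzM (W 0) + nnzV (b 0))) + (nnzM Win + nnzV bin) := by
      rw [Finset.sum_range_succ']; ring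
    rw [hsum]
    exact h'

/-- componentwise 1-Lipschitz maps are 1-Lipschitz in sup metric. -/
lemma lipschitz_comp_pi {k : ℕ} {σ : ℝ → ℝ} (hσ : LipschitzWith 1 σ) :
    LipschitzWith 1 (fun (v : Fin k → ℝ) i => σ (v i)) := by
  apply LipschitzWith.of_dist_le_mul
  intro v w
  rw [NNReal.coe_one, one_mul, dist_pi_le_iff dist_nonneg]
  intro i
  calc dist (σ (v i)) (σ (w i)) ≤ dist (v i) (w i) := by
        simpa using hσ.dist_le_mul (v i) (w i)
    _ ≤ dist v w := dist_le_pi_dist v w i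

lemma lipschitz_relu : LipschitzWith 1 relu := by
  apply LipschitzWith.of_dist_le_mul
  intro a b
  rw [NNReal.coe_one, one_mul, Real.dist_eq, Real.dist_eq, relu, relu]
  exact abs_max_sub_max_le_abs _ _ _

/-- Affine maps are Lipschitz. -/
lemma lipschitz_affine {n m : ℕ} (W : Matrix (Fin m) (Fin n) ℝ) (b : Fin m → ℝ) :
    ∃ K : NNReal, LipschitzWith K (fun x => W.mulVec x + b) := by
  set Wc : (Fin n → ℝ) →L[ℝ] (Fin m → ℝ) := LinearMap.toContinuousLinearMap (Matrix.mulVecLin W)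
  refine ⟨‖Wc‖₊, ?_⟩
  have hK : LipschitzWith ‖Wc‖₊ (fun x : Fin n → ℝ => W.mulVec x) := Wc.lipschitz
  apply LipschitzWith.of_dist_le_mul
  intro x y
  rw [dist_add_right]
  exact hK.dist_le_mul x y

lemma MLPRep.lipschitz {σ : ℝ → ℝ} (hσ : LipschitzWith 1 σ)
    {depth width params n m : ℕ} {f : (Fin n → ℝ) → (Fin m → ℝ)}
    (h : MLPRep σ depth width params n m f) : ∃ K : NNReal, LipschitzWith K f := by
  induction h with
  | affine W b => exact lipschitz_affine W b
  | layer W b hf ih =>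
    obtain ⟨K, hK⟩ := ih
    obtain ⟨K', hK'⟩ := lipschitz_affine W b
    exact ⟨K * (1 * K'), hK.comp ((lipschitz_comp_pi hσ).comp hK')⟩






lemma nnzV_le {m : ℕ} (b : Fin m → ℝ) : nnzV b ≤ m := by
  classical
  calc nnzV b ≤ (Finset.univ : Finset (Fin m)).card := Finset.card_filter_le _ _
    _ = m := by simp

lemma nnzM_le {m n : ℕ} (W : Matrix (Fin m) (Fin n) ℝ) : nnzM W ≤ m * n := by
  classical
  calc nnzM W ≤ (Finset.univ : Finset (Fin m × Fin n)).card := Finset.card_filter_le _ _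
    _ = m * n := by simp

open scoped Classical in
/-- If every row of `W` has at most `R` nonzero entries then `nnzM W ≤ m * R`. -/
lemma nnzM_le_of_rows {m n : ℕ} (W : Matrix (Fin m) (Fin n) ℝ) (R : ℕ)
    (h : ∀ i, ((Finset.univ : Finset (Fin n)).filter fun j => W i j ≠ 0).card ≤ R) :
    nnzM W ≤ m * R := by
  classical
  rw [nnzM, Finset.card_eq_sum_card_fiberwise
    (f := fun p : Fin m × Fin n => p.1) (t := Finset.univ) (fun p _ => Finset.mem_univ _)]
  calc (∑ i : Fin m, ((Finset.univ.filter fun p : Fin m × Fin n => W p.1 p.2 ≠ 0).filter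
          fun p => p.1 = i).card)
      ≤ ∑ i : Fin m, R := by
        refine Finset.sum_le_sum fun i _ => le_trans ?_ (h i)
        apply Finset.card_le_card_of_injOn (fun p => p.2)
        · intro p hp
          simp only [Finset.mem_coe, Finset.mem_filter, Finset.mem_univ, true_and] at hp ⊢
          obtain ⟨h1, h2⟩ := hp
          rwa [h2] at h1
        · intro p hp p' hp' hpp
          simp only [Finset.mem_coe, Finset.mem_filter] at hp hp'
          exact Prod.ext (hp.2.trans hp'.2.symm) hpp
    _ = m * R := by simp [Finset.sum_const, mul_comm]

open scoped Classical in
/-- Cardinality of a filter is invariant under an equivalence of index types. -/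
lemma card_filter_equiv {α β : Type*} [Fintype α] [Fintype β] (e : α ≃ β) (P : β → Prop)
    [DecidablePred P] :
    ((Finset.univ : Finset α).filter fun a => P (e a)).card
      = ((Finset.univ : Finset β).filter fun b => P b).card := by
  apply Finset.card_bij (fun a _ => e a)
  · intro a ha
    simp only [Finset.mem_filter, Finset.mem_univ, true_and] at ha ⊢
    exact ha
  · intro a _ a' _ h
    exact e.injective h
  · intro b hb
    refine ⟨e.symm b, ?_, by simp⟩
    simp only [Finset.mem_filter, Finset.mem_univ, true_and, Equiv.apply_symm_apply] at hb ⊢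
    exact hb


section Net

variable (d n : ℕ)

abbrev Slot := (Fin d → Fin (n+1)) × (Fin 4 × Fin d)

def yq (q : Fin d → Fin (n+1)) (x : Fin (d+1) → ℝ) (k : ℕ) : ℝ :=
  if h : k < d then (n : ℝ) * x (Fin.castSucc ⟨k, h⟩) - (q ⟨k, h⟩ : ℝ) else 0

def hatq (q : Fin d → Fin (n+1)) (x : Fin (d+1) → ℝ) : ℝ :=
  relu (1 - pm (yq d n q x) d - pm (fun k => -(yq d n q x k)) d)

def winS : Slot d n → Fin (d+1) → ℝ := fun s j =>
  if s.2.1 = 2 ∧ j = Fin.castSucc s.2.2 then (n : ℝ)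
  else if s.2.1 = 3 ∧ j = Fin.castSucc s.2.2 then -(n : ℝ) else 0

def binS : Slot d n → ℝ := fun s =>
  if s.2.1 = 2 then -(s.1 s.2.2 : ℝ) else if s.2.1 = 3 then (s.1 s.2.2 : ℝ) else 0

def wmidS (k : ℕ) : Slot d n → Slot d n → ℝ := fun s s' =>
  if s.2.1 = 0 ∧ s.2.2.1 = k then
    (if s' = (s.1, (2, s.2.2)) then 1
     else if s'.1 = s.1 ∧ s'.2.1 = 0 ∧ s'.2.2.1 < k then -1 else 0)
  else if s.2.1 = 1 ∧ s.2.2.1 = k then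
    (if s' = (s.1, (3, s.2.2)) then 1
     else if s'.1 = s.1 ∧ s'.2.1 = 1 ∧ s'.2.2.1 < k then -1 else 0)
  else (if s' = s then 1 else 0)

def wfinS : Slot d n → Slot d n → ℝ := fun s s' =>
  if s.2.1 = 0 ∧ s.2.2.1 = 0 ∧ s'.1 = s.1 ∧ (s'.2.1 = 0 ∨ s'.2.1 = 1) then -1 else 0

def bfinS : Slot d n → ℝ := fun s => if s.2.1 = 0 ∧ s.2.2.1 = 0 then 1 else 0

def woutS (c : (Fin d → Fin (n+1)) → ℝ) : Fin (d+1) → Slot d n → ℝ := fun o s =>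
  if o = Fin.last d ∧ s.2.1 = 0 ∧ s.2.2.1 = 0 then c s.1 else 0

def sval (k : ℕ) (x : Fin (d+1) → ℝ) : Slot d n → ℝ := fun s =>
  if k ≤ d then
    (if s.2.1 = 0 then
       (if s.2.2.1 < k then pm (yq d n s.1 x) (s.2.2.1+1) - pm (yq d n s.1 x) s.2.2.1 else 0)
     else if s.2.1 = 1 then
       (if s.2.2.1 < k then
         pm (fun i => -(yq d n s.1 x i)) (s.2.2.1+1) - pm (fun i => -(yq d n s.1 x i)) s.2.2.1
        else 0)
     else if s.2.1 = 2 then relu (yq d n s.1 x s.2.2.1)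
     else relu (-(yq d n s.1 x s.2.2.1)))
  else (if s.2.1 = 0 ∧ s.2.2.1 = 0 then hatq d n s.1 x else 0)

variable {d n}

lemma pm_succ_sub (f : ℕ → ℝ) (k : ℕ) : pm f (k+1) - pm f k = relu (f k - pm f k) := by
  rcases le_total (f k) (pm f k) with h | h
  · rw [pm, max_eq_left h, relu_of_nonpos (by linarith)]; ring
  · rw [pm, max_eq_right h, relu_of_nonneg (by linarith)]

lemma pm_le_succ (f : ℕ → ℝ) (k : ℕ) : pm f k ≤ pm f (k+1) := le_max_left _ _

lemma relu_relu_sub {a c : ℝ} (hc : 0 ≤ c) : relu (relu a - c) = relu (a - c) := by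
  rcases le_total 0 a with h | h
  · rw [relu_of_nonneg h]
  · rw [relu_of_nonpos h, relu_of_nonpos (by linarith), relu_of_nonpos (by linarith)]

lemma sval_nonneg (k : ℕ) (x : Fin (d+1) → ℝ) (s : Slot d n) : 0 ≤ sval d n k x s := by
  rcases s with ⟨q, t, j⟩
  unfold sval
  split_ifs <;>
    first
      | exact le_refl 0
      | exact relu_nonneg _
      | { have := pm_le_succ (yq d n q x) j.1; linarith }
      | { have := pm_le_succ (fun i => -(yq d n q x i)) j.1; linarith }

lemma sum_slot_delta (v : Slot d n → ℝ) (s₀ : Slot d n) :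
    ∑ s : Slot d n, (if s = s₀ then (1:ℝ) else 0) * v s = v s₀ := by
  classical
  rw [Finset.sum_congr rfl (fun s _ => by rw [ite_mul, one_mul, zero_mul])]
  rw [Finset.sum_ite_eq' Finset.univ s₀ v, if_pos (Finset.mem_univ s₀)]

lemma sum_slot_pred (v : Slot d n → ℝ) (q : Fin d → Fin (n+1)) (t : Fin 4)
    (P : ℕ → Prop) [DecidablePred P] :
    ∑ s : Slot d n, (if s.1 = q ∧ s.2.1 = t ∧ P s.2.2.1 then (1:ℝ) else 0) * v s
      = ∑ j : Fin d, (if P j.1 then v (q, (t, j)) else 0) := by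
  classical
  rw [Fintype.sum_prod_type]
  rw [Finset.sum_eq_single q]
  · rw [Fintype.sum_prod_type]
    rw [Finset.sum_eq_single t]
    · apply Finset.sum_congr rfl
      intro j _
      by_cases h : P j.1 <;> simp [h]
    · intro t' _ ht'
      apply Finset.sum_eq_zero
      intro j _
      simp [ht']
    · intro h; exact absurd (Finset.mem_univ t) h
  · intro q' _ hq'
    apply Finset.sum_eq_zero
    intro b _
    simp [hq']
  · intro h; exact absurd (Finset.mem_univ q) h

lemma mulvec_win (s : Slot d n) (x : Fin (d+1) → ℝ) :
    ∑ j, winS d n s j * x j =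
      if s.2.1 = 2 then (n:ℝ) * x (Fin.castSucc s.2.2)
      else if s.2.1 = 3 then -((n:ℝ) * x (Fin.castSucc s.2.2)) else 0 := by
  classical
  rcases s with ⟨q, t, j⟩
  by_cases h2 : t = 2
  · rw [if_pos h2]
    rw [Finset.sum_congr rfl (fun j' _ => show winS d n (q,(t,j)) j' * x j'
        = (if j' = Fin.castSucc j then (n:ℝ) * x j' else 0) from by
      unfold winS; split_ifs <;> simp_all)]
    rw [Finset.sum_ite_eq' Finset.univ (Fin.castSucc j) (fun j' => (n:ℝ) * x j'),
      if_pos (Finset.mem_univ _)]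
  · rw [if_neg h2]
    by_cases h3 : t = 3
    · rw [if_pos h3]
      rw [Finset.sum_congr rfl (fun j' _ => show winS d n (q,(t,j)) j' * x j'
          = (if j' = Fin.castSucc j then -((n:ℝ) * x j') else 0) from by
        unfold winS; split_ifs <;> simp_all)]
      rw [Finset.sum_ite_eq' Finset.univ (Fin.castSucc j) (fun j' => -((n:ℝ) * x j')),
        if_pos (Finset.mem_univ _)]
    · rw [if_neg h3]
      apply Finset.sum_eq_zero
      intro j' _
      unfold winS
      split_ifs <;> simp_all

lemma sum_slot_lt (v : Slot d n → ℝ) (q : Fin d → Fin (n+1)) (t : Fin 4) (k : ℕ) :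
    ∑ s : Slot d n, (if s.1 = q ∧ s.2.1 = t ∧ s.2.2.1 < k then (1:ℝ) else 0) * v s
      = ∑ j : Fin d, (if j.1 < k then v (q, (t, j)) else 0) :=
  sum_slot_pred v q t (fun a => a < k)

lemma sum_slot_all (v : Slot d n → ℝ) (q : Fin d → Fin (n+1)) (t : Fin 4) :
    ∑ s : Slot d n, (if s.1 = q ∧ s.2.1 = t then (1:ℝ) else 0) * v s
      = ∑ j : Fin d, v (q, (t, j)) := by
  classical
  have h := sum_slot_pred v q t (fun _ => True)
  simp only [and_true, if_true] at h
  exact h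

lemma mulvec_wmid (k : ℕ) (s : Slot d n) (v : Slot d n → ℝ) :
    ∑ s', wmidS d n k s s' * v s' =
      if s.2.1 = 0 ∧ s.2.2.1 = k then
        v (s.1, (2, s.2.2)) - ∑ j : Fin d, (if j.1 < k then v (s.1, (0, j)) else 0)
      else if s.2.1 = 1 ∧ s.2.2.1 = k then
        v (s.1, (3, s.2.2)) - ∑ j : Fin d, (if j.1 < k then v (s.1, (1, j)) else 0)
      else v s := by
  classical
  by_cases h0 : s.2.1 = 0 ∧ s.2.2.1 = k
  · rw [if_pos h0]
    have hpt : ∀ s', wmidS d n k s s' * v s' =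
        (if s' = (s.1, (2, s.2.2)) then (1:ℝ) else 0) * v s'
        - (if s'.1 = s.1 ∧ s'.2.1 = 0 ∧ s'.2.2.1 < k then (1:ℝ) else 0) * v s' := by
      intro s'
      unfold wmidS
      rw [if_pos h0]
      by_cases hA : s' = (s.1, (2, s.2.2))
      · have hB : ¬(s'.1 = s.1 ∧ s'.2.1 = 0 ∧ s'.2.2.1 < k) := by
          rcases hA with rfl; rintro ⟨-, h, -⟩
          exact (by decide : ((2:Fin 4) ≠ 0)) h
        rw [if_pos hA, if_pos hA, if_neg hB]; ring
      · rw [if_neg hA, if_neg hA]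
        by_cases hB : s'.1 = s.1 ∧ s'.2.1 = 0 ∧ s'.2.2.1 < k
        · rw [if_pos hB, if_pos hB]; ring
        · rw [if_neg hB, if_neg hB]; ring
    rw [Finset.sum_congr rfl (fun s' _ => hpt s'), Finset.sum_sub_distrib,
      sum_slot_delta, sum_slot_lt]
  · rw [if_neg h0]
    by_cases h1 : s.2.1 = 1 ∧ s.2.2.1 = k
    · rw [if_pos h1]
      have hpt : ∀ s', wmidS d n k s s' * v s' =
          (if s' = (s.1, (3, s.2.2)) then (1:ℝ) else 0) * v s'
          - (if s'.1 = s.1 ∧ s'.2.1 = 1 ∧ s'.2.2.1 < k then (1:ℝ) else 0) * v s' := by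
        intro s'
        unfold wmidS
        rw [if_neg h0, if_pos h1]
        by_cases hA : s' = (s.1, (3, s.2.2))
        · have hB : ¬(s'.1 = s.1 ∧ s'.2.1 = 1 ∧ s'.2.2.1 < k) := by
            rcases hA with rfl; rintro ⟨-, h, -⟩
            exact (by decide : ((3:Fin 4) ≠ 1)) h
          rw [if_pos hA, if_pos hA, if_neg hB]; ring
        · rw [if_neg hA, if_neg hA]
          by_cases hB : s'.1 = s.1 ∧ s'.2.1 = 1 ∧ s'.2.2.1 < k
          · rw [if_pos hB, if_pos hB]; ring
          · rw [if_neg hB, if_neg hB]; ring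
      rw [Finset.sum_congr rfl (fun s' _ => hpt s'), Finset.sum_sub_distrib,
        sum_slot_delta, sum_slot_lt]
    · rw [if_neg h1]
      have hpt : ∀ s', wmidS d n k s s' * v s' =
          (if s' = s then (1:ℝ) else 0) * v s' := by
        intro s'
        unfold wmidS
        rw [if_neg h0, if_neg h1]
      rw [Finset.sum_congr rfl (fun s' _ => hpt s'), sum_slot_delta]

lemma mulvec_wfin (s : Slot d n) (v : Slot d n → ℝ) :
    ∑ s', wfinS d n s s' * v s' =
      if s.2.1 = 0 ∧ s.2.2.1 = 0 then
        -(∑ j : Fin d, v (s.1, (0, j))) - (∑ j : Fin d, v (s.1, (1, j)))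
      else 0 := by
  classical
  by_cases h0 : s.2.1 = 0 ∧ s.2.2.1 = 0
  · rw [if_pos h0]
    have hpt : ∀ s', wfinS d n s s' * v s' =
        -((if s'.1 = s.1 ∧ s'.2.1 = 0 then (1:ℝ) else 0) * v s')
        - (if s'.1 = s.1 ∧ s'.2.1 = 1 then (1:ℝ) else 0) * v s' := by
      intro s'
      unfold wfinS
      by_cases hq : s'.1 = s.1
      · by_cases hA : s'.2.1 = 0
        · rw [if_pos ⟨h0.1, h0.2, hq, Or.inl hA⟩, if_pos ⟨hq, hA⟩,
            if_neg (by rw [hA]; rintro ⟨-, h⟩; exact (by decide : ((0:Fin 4) ≠ 1)) h)]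
          ring
        · by_cases hB : s'.2.1 = 1
          · rw [if_pos ⟨h0.1, h0.2, hq, Or.inr hB⟩, if_neg (by tauto), if_pos ⟨hq, hB⟩]
            ring
          · rw [if_neg (by tauto), if_neg (by tauto), if_neg (by tauto)]
            ring
      · rw [if_neg (by tauto), if_neg (by tauto), if_neg (by tauto)]
        ring
    rw [Finset.sum_congr rfl (fun s' _ => hpt s'), Finset.sum_sub_distrib,
      Finset.sum_neg_distrib]
    rw [sum_slot_all, sum_slot_all]
  · rw [if_neg h0]
    apply Finset.sum_eq_zero
    intro s' _
    unfold wfinS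
    rw [if_neg (by tauto)]
    exact zero_mul _

lemma sum_fin_telescope (f : ℕ → ℝ) {k : ℕ} (hk : k ≤ d) :
    ∑ j : Fin d, (if j.1 < k then pm f (j.1+1) - pm f j.1 else 0) = pm f k := by
  rw [Fin.sum_univ_eq_sum_range (fun i => if i < k then pm f (i+1) - pm f i else 0) d]
  rw [← Finset.sum_subset (Finset.range_subset_range.2 hk)
    (fun i _ hi => by rw [if_neg (by simpa using hi)])]
  rw [Finset.sum_congr rfl (fun i hi => if_pos (Finset.mem_range.1 hi))]
  rw [Finset.sum_range_sub (fun i => pm f i)]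
  simp [pm]

variable (d n) in
def bigN : ℕ := Fintype.card (Slot d n)

variable (d n) in
def eqv : Fin (bigN d n) ≃ Slot d n := (Fintype.equivFin _).symm

variable (d n) in
def WinM : Matrix (Fin (bigN d n)) (Fin (d+1)) ℝ := fun i j => winS d n (eqv d n i) j
variable (d n) in
def binM : Fin (bigN d n) → ℝ := fun i => binS d n (eqv d n i)
variable (d n) in
def WM : ℕ → Matrix (Fin (bigN d n)) (Fin (bigN d n)) ℝ := fun k i j =>
  if k < d then wmidS d n k (eqv d n i) (eqv d n j) else wfinS d n (eqv d n i) (eqv d n j)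
variable (d n) in
def bM : ℕ → Fin (bigN d n) → ℝ := fun k i => if k < d then 0 else bfinS d n (eqv d n i)
variable (d n) in
def WoutM (c : (Fin d → Fin (n+1)) → ℝ) : Matrix (Fin (d+1)) (Fin (bigN d n)) ℝ :=
  fun o i => woutS d n c o (eqv d n i)

lemma state_eq (x : Fin (d+1) → ℝ) :
    ∀ k, k ≤ d → ∀ i, chainState (WinM d n) (binM d n) (WM d n) (bM d n) k x i
      = sval d n k x (eqv d n i) := by
  intro k
  induction k with
  | zero =>
    intro _ i
    show relu ((·) _) = _
    simp only [chainState, Matrix.mulVec, dotProduct, Pi.add_apply, WinM, binM]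
    rw [mulvec_win]
    generalize eqv d n i = s
    rcases s with ⟨q, t, j⟩
    fin_cases t <;>
      simp [sval, binS, relu, Fin.ext_iff, yq, j.isLt, sub_eq_add_neg,
        show ((3:Fin 4):ℕ) = 3 from rfl, show ((2:Fin 4):ℕ) = 2 from rfl, add_comm]
  | succ k ih =>
    intro hk i
    have hkd : k < d := hk
    have hkd' : k ≤ d := le_of_lt hkd
    simp only [chainState, Matrix.mulVec, dotProduct, Pi.add_apply, WM, bM,
      if_pos hkd]
    rw [Finset.sum_congr rfl (fun j _ => by rw [ih hkd' j])]
    rw [Equiv.sum_comp (eqv d n) (fun s' => wmidS d n k (eqv d n i) s' * sval d n k x s')]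
    rw [mulvec_wmid]
    generalize eqv d n i = s
    rcases s with ⟨q, t, j⟩
    have hk1 : k + 1 ≤ d := hk
    by_cases h0 : t = 0 ∧ j.1 = k
    · obtain ⟨ht, hj⟩ := h0
      subst ht
      rw [if_pos ⟨rfl, hj⟩]
      have hs2 : sval d n k x (q, (2, j)) = relu (yq d n q x j.1) := by
        simp [sval, hkd', Fin.ext_iff, show ((2:Fin 4):ℕ) = 2 from rfl]
      have hsum : (∑ j' : Fin d, if j'.1 < k then sval d n k x (q, (0, j')) else 0)
          = pm (yq d n q x) k := by
        rw [Finset.sum_congr rfl (fun j' _ => show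
            (if j'.1 < k then sval d n k x (q, (0, j')) else 0)
              = (if j'.1 < k then pm (yq d n q x) (j'.1+1) - pm (yq d n q x) j'.1 else 0) from by
          by_cases hlt : j'.1 < k
          · rw [if_pos hlt, if_pos hlt]; simp [sval, hkd', hlt]
          · rw [if_neg hlt, if_neg hlt])]
        exact sum_fin_telescope (yq d n q x) hkd'
      rw [hs2, hsum, add_zero, relu_relu_sub (pm_nonneg _ _), hj,
        ← pm_succ_sub (yq d n q x) k]
      simp [sval, hk1, hj, Nat.lt_succ_self]
    · rw [if_neg (by simpa using h0)]
      by_cases h1 : t = 1 ∧ j.1 = k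
      · obtain ⟨ht, hj⟩ := h1
        subst ht
        rw [if_pos ⟨rfl, hj⟩]
        have hs2 : sval d n k x (q, (3, j)) = relu (-(yq d n q x j.1)) := by
          simp [sval, hkd', Fin.ext_iff, show ((3:Fin 4):ℕ) = 3 from rfl]
        have hsum : (∑ j' : Fin d, if j'.1 < k then sval d n k x (q, (1, j')) else 0)
            = pm (fun i => -(yq d n q x i)) k := by
          rw [Finset.sum_congr rfl (fun j' _ => show
              (if j'.1 < k then sval d n k x (q, (1, j')) else 0)
                = (if j'.1 < k then pm (fun i => -(yq d n q x i)) (j'.1+1)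
                    - pm (fun i => -(yq d n q x i)) j'.1 else 0) from by
            by_cases hlt : j'.1 < k
            · rw [if_pos hlt, if_pos hlt]
              simp [sval, hkd', hlt, Fin.ext_iff]
            · rw [if_neg hlt, if_neg hlt])]
          exact sum_fin_telescope _ hkd'
        rw [hs2, hsum, add_zero, relu_relu_sub (pm_nonneg _ _), hj,
          ← pm_succ_sub (fun i => -(yq d n q x i)) k]
        simp [sval, hk1, hj, Nat.lt_succ_self, Fin.ext_iff]
      · rw [if_neg (by simpa using h1), add_zero,
          relu_of_nonneg (sval_nonneg _ _ _)]
        have hne0 : ¬(t = 0 ∧ j.1 = k) := h0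
        have hne1 : ¬(t = 1 ∧ j.1 = k) := h1
        fin_cases t
        · have hjk : j.1 ≠ k := fun hh => hne0 ⟨rfl, hh⟩
          simp only [sval, if_pos hkd', if_pos hk1]
          norm_num
          by_cases hlt : j.1 < k
          · rw [if_pos hlt, if_pos (by omega)]
          · rw [if_neg hlt, if_neg (by omega)]
        · have hjk : j.1 ≠ k := fun hh => hne1 ⟨rfl, hh⟩
          simp only [sval, if_pos hkd', if_pos hk1]
          norm_num
          by_cases hlt : j.1 < k
          · rw [if_pos hlt, if_pos (by omega)]
          · rw [if_neg hlt, if_neg (by omega)]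
        · simp [sval, hkd', hk1]
        · simp [sval, hkd', hk1]

lemma state_final (x : Fin (d+1) → ℝ) (i : Fin (bigN d n)) :
    chainState (WinM d n) (binM d n) (WM d n) (bM d n) (d+1) x i
      = sval d n (d+1) x (eqv d n i) := by
  simp only [chainState, Matrix.mulVec, dotProduct, Pi.add_apply, WM, bM,
    if_neg (lt_irrefl d)]
  rw [Finset.sum_congr rfl (fun j _ => by rw [state_eq x d le_rfl j])]
  rw [Equiv.sum_comp (eqv d n) (fun s' => wfinS d n (eqv d n i) s' * sval d n d x s')]
  rw [mulvec_wfin]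
  generalize eqv d n i = s
  rcases s with ⟨q, t, j⟩
  by_cases h0 : t = 0 ∧ j.1 = 0
  · obtain ⟨ht, hj⟩ := h0
    subst ht
    rw [if_pos ⟨rfl, hj⟩]
    have hsum0 : (∑ j' : Fin d, sval d n d x (q, (0, j')))
        = pm (yq d n q x) d := by
      rw [Finset.sum_congr rfl (fun j' _ => show sval d n d x (q, (0, j'))
          = (if j'.1 < d then pm (yq d n q x) (j'.1+1) - pm (yq d n q x) j'.1 else 0) from by
        simp [sval])]
      exact sum_fin_telescope _ le_rfl
    have hsum1 : (∑ j' : Fin d, sval d n d x (q, (1, j')))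
        = pm (fun i => -(yq d n q x i)) d := by
      rw [Finset.sum_congr rfl (fun j' _ => show sval d n d x (q, (1, j'))
          = (if j'.1 < d then pm (fun i => -(yq d n q x i)) (j'.1+1)
              - pm (fun i => -(yq d n q x i)) j'.1 else 0) from by
        simp [sval, Fin.ext_iff])]
      exact sum_fin_telescope _ le_rfl
    have hbf : bfinS d n (q, ((0:Fin 4), j)) = 1 := if_pos ⟨rfl, hj⟩
    rw [hsum0, hsum1, hbf]
    have hsv : sval d n (d+1) x (q, ((0:Fin 4), j)) = hatq d n q x := by
      simp [sval, hj]
    rw [hsv, hatq]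
    congr 1
    ring
  · rw [if_neg (by simpa using h0)]
    have hbf : bfinS d n (q, (t, j)) = 0 := if_neg (by simpa using h0)
    rw [hbf]
    have hsv : sval d n (d+1) x (q, (t, j)) = 0 := by
      unfold sval
      rw [if_neg (by omega), if_neg (by simpa using h0)]
    rw [hsv, zero_add, relu_of_nonpos le_rfl]

variable (d) in
def bout0 : Fin (d+1) → ℝ := fun _ => 0

variable (d n) in
def netFun (c : (Fin d → Fin (n+1)) → ℝ) : (Fin (d+1) → ℝ) → (Fin (d+1) → ℝ) :=
  fun x => (WoutM d n c).mulVec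
    (chainState (WinM d n) (binM d n) (WM d n) (bM d n) (d+1) x) + bout0 d

lemma netFun_apply (hd : 0 < d) (c : (Fin d → Fin (n+1)) → ℝ) (x : Fin (d+1) → ℝ) :
    netFun d n c x = fun o => if o = Fin.last d then ∑ q, c q * hatq d n q x else 0 := by
  funext o
  have hrw : netFun d n c x o = ∑ i, woutS d n c o (eqv d n i)
      * chainState (WinM d n) (binM d n) (WM d n) (bM d n) (d+1) x i := by
    simp [netFun, bout0, Matrix.mulVec, dotProduct, WoutM]
  rw [hrw]
  rw [Finset.sum_congr rfl (fun i _ => by rw [state_final x i])]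
  rw [Equiv.sum_comp (eqv d n) (fun s => woutS d n c o s * sval d n (d+1) x s)]
  by_cases ho : o = Fin.last d
  · rw [if_pos ho]
    have hpt : ∀ s : Slot d n, woutS d n c o s * sval d n (d+1) x s
        = if s.2.1 = 0 ∧ s.2.2.1 = 0 then c s.1 * hatq d n s.1 x else 0 := by
      intro s
      unfold woutS sval
      rw [if_neg (by omega : ¬ (d+1 ≤ d))]
      by_cases hc : s.2.1 = 0 ∧ s.2.2.1 = 0
      · rw [if_pos ⟨ho, hc⟩, if_pos hc, if_pos hc]
      · rw [if_neg (by tauto), if_neg hc, if_neg hc, zero_mul]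
    rw [Finset.sum_congr rfl (fun s _ => hpt s)]
    rw [Fintype.sum_prod_type]
    apply Finset.sum_congr rfl
    intro q _
    rw [Finset.sum_eq_single (((0:Fin 4), (⟨0, hd⟩ : Fin d)) : Fin 4 × Fin d)]
    · rw [if_pos ⟨rfl, rfl⟩]
    · intro b _ hb
      apply if_neg
      rintro ⟨h1, h2⟩
      exact hb (Prod.ext h1 (Fin.ext h2))
    · intro h; exact absurd (Finset.mem_univ _) h
  · rw [if_neg ho]
    apply Finset.sum_eq_zero
    intro s _
    unfold woutS
    rw [if_neg (by tauto), zero_mul]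

lemma netMLP (c : (Fin d → Fin (n+1)) → ℝ) :
    MLPRep relu ((d+1)+2) (bigN d n)
      ((nnzM (WoutM d n c) + nnzV (bout0 d))
        + (∑ k ∈ Finset.range (d+1), (nnzM (WM d n k) + nnzV (bM d n k)))
        + (nnzM (WinM d n) + nnzV (binM d n)))
      (d+1) (d+1) (netFun d n c) :=
  mlp_congr (chain_mlp (d+1) (WinM d n) (binM d n) (WM d n) (bM d n) (WoutM d n c) (bout0 d))
    (fun x => rfl)

open scoped Classical in
lemma row_support_mid (k : ℕ) (s : Slot d n) :
    ((Finset.univ : Finset (Slot d n)).filter fun s' => wmidS d n k s s' ≠ 0).card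
      ≤ 2*d+3 := by
  classical
  set T : Finset (Slot d n) := insert s (insert (s.1, ((2:Fin 4), s.2.2))
    (insert (s.1, ((3:Fin 4), s.2.2))
      ((Finset.univ.image fun j : Fin d => (s.1, ((0:Fin 4), j)))
        ∪ (Finset.univ.image fun j : Fin d => (s.1, ((1:Fin 4), j)))))) with hT
  have hsub : ((Finset.univ : Finset (Slot d n)).filter fun s' => wmidS d n k s s' ≠ 0) ⊆ T := by
    intro s' hs'
    rw [Finset.mem_filter] at hs'
    have h := hs'.2
    unfold wmidS at h
    rw [hT]
    simp only [Finset.mem_insert, Finset.mem_union, Finset.mem_image, Finset.mem_univ,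
      true_and]
    split_ifs at h with h1 h2 h3 h4 h5 h6 h7
    · exact Or.inr (Or.inl h2)
    · exact Or.inr (Or.inr (Or.inr (Or.inl ⟨s'.2.2, by
        rcases s' with ⟨q', t', j'⟩
        obtain ⟨ha, hb, -⟩ := h3
        simp only at ha hb ⊢
        rw [ha, hb]⟩)))
    · exact absurd rfl h
    · exact Or.inr (Or.inr (Or.inl h5))
    · exact Or.inr (Or.inr (Or.inr (Or.inr ⟨s'.2.2, by
        rcases s' with ⟨q', t', j'⟩
        obtain ⟨ha, hb, -⟩ := h6
        simp only at ha hb ⊢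
        rw [ha, hb]⟩)))
    · exact absurd rfl h
    · exact Or.inl h7
    · exact absurd rfl h
  calc ((Finset.univ : Finset (Slot d n)).filter fun s' => wmidS d n k s s' ≠ 0).card
      ≤ T.card := Finset.card_le_card hsub
    _ ≤ 2*d+3 := by
      rw [hT]
      calc (insert s (insert (s.1, ((2:Fin 4), s.2.2)) (insert (s.1, ((3:Fin 4), s.2.2))
            ((Finset.univ.image fun j : Fin d => (s.1, ((0:Fin 4), j)))
              ∪ (Finset.univ.image fun j : Fin d => (s.1, ((1:Fin 4), j))))))).card
          ≤ ((Finset.univ.image fun j : Fin d => (s.1, ((0:Fin 4), j)))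
              ∪ (Finset.univ.image fun j : Fin d => (s.1, ((1:Fin 4), j)))).card + 3 := by
            have h1 := Finset.card_insert_le (s.1, ((3:Fin 4), s.2.2))
              ((Finset.univ.image fun j : Fin d => (s.1, ((0:Fin 4), j)))
                ∪ (Finset.univ.image fun j : Fin d => (s.1, ((1:Fin 4), j))))
            have h2 := Finset.card_insert_le (s.1, ((2:Fin 4), s.2.2))
              (insert (s.1, ((3:Fin 4), s.2.2))
                ((Finset.univ.image fun j : Fin d => (s.1, ((0:Fin 4), j)))
                  ∪ (Finset.univ.image fun j : Fin d => (s.1, ((1:Fin 4), j)))))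
            have h3 := Finset.card_insert_le s
              (insert (s.1, ((2:Fin 4), s.2.2)) (insert (s.1, ((3:Fin 4), s.2.2))
                ((Finset.univ.image fun j : Fin d => (s.1, ((0:Fin 4), j)))
                  ∪ (Finset.univ.image fun j : Fin d => (s.1, ((1:Fin 4), j))))))
            omega
        _ ≤ 2*d+3 := by
            have h4 := Finset.card_union_le
              (Finset.univ.image fun j : Fin d => (s.1, ((0:Fin 4), j)))
              (Finset.univ.image fun j : Fin d => (s.1, ((1:Fin 4), j)))
            have h5 := Finset.card_image_le (s := (Finset.univ : Finset (Fin d)))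
              (f := fun j : Fin d => (s.1, ((0:Fin 4), j)))
            have h6 := Finset.card_image_le (s := (Finset.univ : Finset (Fin d)))
              (f := fun j : Fin d => (s.1, ((1:Fin 4), j)))
            have h7 : (Finset.univ : Finset (Fin d)).card = d := by simp
            omega

open scoped Classical in
lemma row_support_fin (s : Slot d n) :
    ((Finset.univ : Finset (Slot d n)).filter fun s' => wfinS d n s s' ≠ 0).card
      ≤ 2*d+3 := by
  classical
  have hsub : ((Finset.univ : Finset (Slot d n)).filter fun s' => wfinS d n s s' ≠ 0)
      ⊆ ((Finset.univ.image fun j : Fin d => (s.1, ((0:Fin 4), j)))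
          ∪ (Finset.univ.image fun j : Fin d => (s.1, ((1:Fin 4), j)))) := by
    intro s' hs'
    rw [Finset.mem_filter] at hs'
    have h := hs'.2
    unfold wfinS at h
    split_ifs at h with h1
    · obtain ⟨-, -, hq, ht⟩ := h1
      simp only [Finset.mem_union, Finset.mem_image, Finset.mem_univ, true_and]
      rcases s' with ⟨q', t', j'⟩
      simp only at hq ht
      rcases ht with ht | ht
      · exact Or.inl ⟨j', by rw [hq, ht]⟩
      · exact Or.inr ⟨j', by rw [hq, ht]⟩
    · exact absurd rfl h
  calc _ ≤ _ := Finset.card_le_card hsub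
    _ ≤ 2*d+3 := by
      have h4 := Finset.card_union_le
        (Finset.univ.image fun j : Fin d => (s.1, ((0:Fin 4), j)))
        (Finset.univ.image fun j : Fin d => (s.1, ((1:Fin 4), j)))
      have h5 := Finset.card_image_le (s := (Finset.univ : Finset (Fin d)))
        (f := fun j : Fin d => (s.1, ((0:Fin 4), j)))
      have h6 := Finset.card_image_le (s := (Finset.univ : Finset (Fin d)))
        (f := fun j : Fin d => (s.1, ((1:Fin 4), j)))
      have h7 : (Finset.univ : Finset (Fin d)).card = d := by simp
      omega

lemma nnzM_WM_le (k : ℕ) : nnzM (WM d n k) ≤ (bigN d n) * (2*d+3) := by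
  classical
  apply nnzM_le_of_rows
  intro i
  by_cases hkd : k < d
  · have heq : ∀ j, WM d n k i j = wmidS d n k (eqv d n i) (eqv d n j) :=
      fun j => if_pos hkd
    have hfeq : ((Finset.univ : Finset (Fin (bigN d n))).filter fun j => WM d n k i j ≠ 0)
        = ((Finset.univ : Finset (Fin (bigN d n))).filter
            fun j => wmidS d n k (eqv d n i) (eqv d n j) ≠ 0) :=
      Finset.filter_congr (fun j _ => by rw [heq j])
    rw [hfeq, card_filter_equiv (eqv d n) (fun s' => wmidS d n k (eqv d n i) s' ≠ 0)]
    exact row_support_mid k _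
  · have heq : ∀ j, WM d n k i j = wfinS d n (eqv d n i) (eqv d n j) :=
      fun j => if_neg hkd
    have hfeq : ((Finset.univ : Finset (Fin (bigN d n))).filter fun j => WM d n k i j ≠ 0)
        = ((Finset.univ : Finset (Fin (bigN d n))).filter
            fun j => wfinS d n (eqv d n i) (eqv d n j) ≠ 0) :=
      Finset.filter_congr (fun j _ => by rw [heq j])
    rw [hfeq, card_filter_equiv (eqv d n) (fun s' => wfinS d n (eqv d n i) s' ≠ 0)]
    exact row_support_fin _

lemma bigN_eq : bigN d n = (n+1)^d * (4*d) := by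
  rw [bigN]
  rw [Fintype.card_prod, Fintype.card_prod, Fintype.card_fin, Fintype.card_fin]
  congr 1
  rw [Fintype.card_fun, Fintype.card_fin, Fintype.card_fin]

lemma params_le (c : (Fin d → Fin (n+1)) → ℝ) :
    (nnzM (WoutM d n c) + nnzV (bout0 d))
      + (∑ k ∈ Finset.range (d+1), (nnzM (WM d n k) + nnzV (bM d n k)))
      + (nnzM (WinM d n) + nnzV (binM d n))
    ≤ ((d+1) * (bigN d n) + (d+1)) + ((d+1) * ((bigN d n)*(2*d+3) + (bigN d n)))
      + ((bigN d n)*(d+1) + (bigN d n)) := by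
  have h1 : nnzM (WoutM d n c) ≤ (d+1) * bigN d n := nnzM_le _
  have h2 : nnzV (bout0 d) ≤ d+1 := nnzV_le _
  have h4 : (∑ k ∈ Finset.range (d+1), (nnzM (WM d n k) + nnzV (bM d n k)))
      ≤ (d+1) * ((bigN d n)*(2*d+3) + (bigN d n)) := by
    calc (∑ k ∈ Finset.range (d+1), (nnzM (WM d n k) + nnzV (bM d n k)))
        ≤ ∑ _k ∈ Finset.range (d+1), ((bigN d n)*(2*d+3) + (bigN d n)) :=
          Finset.sum_le_sum (fun k _ => add_le_add (nnzM_WM_le k) (nnzV_le _))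
      _ = (d+1) * ((bigN d n)*(2*d+3) + (bigN d n)) := by
          rw [Finset.sum_const, Finset.card_range, smul_eq_mul]
  have h5 : nnzM (WinM d n) ≤ (bigN d n)*(d+1) := nnzM_le _
  have h6 : nnzV (binM d n) ≤ bigN d n := nnzV_le _
  omega

lemma le_pm (f : ℕ → ℝ) : ∀ {k m : ℕ}, k < m → f k ≤ pm f m := by
  intro k m
  induction m with
  | zero => omega
  | succ m ih =>
    intro h
    rcases Nat.lt_succ_iff_lt_or_eq.1 h with h | h
    · exact le_trans (ih h) (le_max_left _ _)
    · subst h; exact le_max_right _ _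

lemma hat_partition (hd : 0 < d) (x : Fin (d+1) → ℝ)
    (hx : ∀ j : Fin d, x (Fin.castSucc j) ∈ Set.Icc (0:ℝ) 1) :
    ∑ q : Fin d → Fin (n+1), hatq d n q x = 1 := by
  set y : ℕ → ℝ := fun k => if h : k < d then (n:ℝ) * x (Fin.castSucc ⟨k,h⟩) else 0 with hy
  have hyb : ∀ k < d, y k ∈ Set.Icc (0:ℝ) n := by
    intro k hk
    rw [hy]
    simp only [dif_pos hk]
    obtain ⟨h0, h1⟩ := hx ⟨k, hk⟩
    have hn0 : (0:ℝ) ≤ n := by positivity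
    refine ⟨by positivity, ?_⟩
    nlinarith
  rw [← partition hd y hyb]
  apply Finset.sum_congr rfl
  intro q _
  rw [hatq, bq, aq]
  have e1 : pm (yq d n q x) d
      = pm (fun k => if h : k < d then y k - (q ⟨k, h⟩ : ℝ) else 0) d := by
    apply pm_congr
    intro k hk
    rw [yq]
    simp only [dif_pos hk, hy]
  have e2 : pm (fun k => -(yq d n q x k)) d
      = pm (fun k => if h : k < d then (q ⟨k, h⟩ : ℝ) - y k else 0) d := by
    apply pm_congr
    intro k hk
    rw [yq]
    simp only [dif_pos hk, hy]
    ring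
  rw [e1, e2]

lemma hat_nonneg (q : Fin d → Fin (n+1)) (x : Fin (d+1) → ℝ) : 0 ≤ hatq d n q x :=
  relu_nonneg _

lemma hat_close (hn : 0 < n) (q : Fin d → Fin (n+1)) (x : Fin (d+1) → ℝ)
    (h : hatq d n q x ≠ 0) (j : Fin d) :
    |x (Fin.castSucc j) - (q j : ℝ)/n| ≤ 1/n := by
  have hpos : 0 < 1 - pm (yq d n q x) d - pm (fun k => -(yq d n q x k)) d := by
    by_contra hc
    push_neg at hc
    exact h (relu_of_nonpos (by linarith))
  have hP := pm_nonneg (yq d n q x) d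
  have hN := pm_nonneg (fun k => -(yq d n q x k)) d
  have h1 : yq d n q x j.1 ≤ 1 := by
    have := le_pm (yq d n q x) j.2
    linarith
  have h2 : -(yq d n q x j.1) ≤ 1 := by
    have hh := le_pm (fun k => -(yq d n q x k)) j.2
    linarith
  rw [yq] at h1 h2
  simp only [dif_pos j.2, Fin.eta] at h1 h2
  have hn' : (0:ℝ) < n := by exact_mod_cast hn
  have heq : x (Fin.castSucc j) - (q j : ℝ)/n = ((n:ℝ) * x (Fin.castSucc j) - (q j : ℝ))/n := by
    field_simp
  rw [abs_le, heq]
  constructor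
  · rw [show -(1/(n:ℝ)) = (-1)/n from by ring]
    gcongr
    linarith
  · gcongr

end Net

lemma lippi {α : Type*} [PseudoMetricSpace α] {D : ℕ} {K : NNReal} {F : Fin D → α → ℝ}
    (h : ∀ i, LipschitzWith K (F i)) : LipschitzWith K (fun x i => F i x) := by
  apply LipschitzWith.of_dist_le_mul
  intro x y
  rw [dist_pi_le_iff (mul_nonneg K.coe_nonneg dist_nonneg)]
  intro i
  exact (h i).dist_le_mul x y

lemma lip_eval {m : ℕ} (i : Fin m) : LipschitzWith 1 (fun z : Fin m → ℝ => z i) := by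
  apply LipschitzWith.of_dist_le_mul
  intro x y
  rw [NNReal.coe_one, one_mul]
  exact dist_le_pi_dist x y i

section Final
variable {d n : ℕ}

lemma yq_ext (q : Fin d → Fin (n+1)) {x x' : Fin (d+1) → ℝ}
    (hxx : ∀ j : Fin d, x (Fin.castSucc j) = x' (Fin.castSucc j)) :
    yq d n q x = yq d n q x' := by
  funext k
  rw [yq, yq]
  by_cases h : k < d
  · rw [dif_pos h, dif_pos h, hxx ⟨k, h⟩]
  · rw [dif_neg h, dif_neg h]

lemma hatq_ext (q : Fin d → Fin (n+1)) {x x' : Fin (d+1) → ℝ}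
    (hxx : ∀ j : Fin d, x (Fin.castSucc j) = x' (Fin.castSucc j)) :
    hatq d n q x = hatq d n q x' := by
  rw [hatq, hatq, yq_ext q hxx]

lemma netFun_ext (hd : 0 < d) (c : (Fin d → Fin (n+1)) → ℝ) {x x' : Fin (d+1) → ℝ}
    (hxx : ∀ j : Fin d, x (Fin.castSucc j) = x' (Fin.castSucc j)) :
    netFun d n c x = netFun d n c x' := by
  rw [netFun_apply hd, netFun_apply hd]
  funext o
  by_cases ho : o = Fin.last d
  · rw [if_pos ho, if_pos ho]
    exact Finset.sum_congr rfl fun q _ => by rw [hatq_ext q hxx]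
  · rw [if_neg ho, if_neg ho]

lemma netFun_castSucc (hd : 0 < d) (c : (Fin d → Fin (n+1)) → ℝ) (x : Fin (d+1) → ℝ)
    (j : Fin d) : netFun d n c x (Fin.castSucc j) = 0 := by
  rw [netFun_apply hd]
  exact if_neg (ne_of_lt (Fin.castSucc_lt_last j))

lemma netFun_last (hd : 0 < d) (c : (Fin d → Fin (n+1)) → ℝ) (x : Fin (d+1) → ℝ) :
    netFun d n c x (Fin.last d) = ∑ q, c q * hatq d n q x := by
  rw [netFun_apply hd]
  exact if_pos rfl

end Final
end NF

namespace NF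

lemma lip_liftEmb {d : ℕ} : LipschitzWith 1 (liftEmb (d := d)) := by
  apply LipschitzWith.of_dist_le_mul
  intro x y
  rw [NNReal.coe_one, one_mul, dist_pi_le_iff dist_nonneg]
  intro i
  induction i using Fin.lastCases with
  | last => simp [liftEmb, Fin.snoc_last, dist_nonneg]
  | cast j =>
    rw [liftEmb, liftEmb, Fin.snoc_castSucc, Fin.snoc_castSucc]
    exact dist_le_pi_dist x y j

end NF

/-- **Statement 9.** Approximation of arbitrary Lipschitz functions `f : ℝ^d → ℝ^D` by the
lifted neural ODE `Ψ = ⨁_i π ∘ Flow(Φ_i) ∘ ι` with ReLU MLP vector fields `Φ_i` on `ℝ^{d+1}` of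
width `O(d n^{d+1})`, depth `O(log₂ d)` and `O(d n^{d+1})` nonzero parameters, with uniform
error `O(1/n)` on `[0,1]^d`. -/
theorem lifted_flow_approximation (d D : ℕ) (hd : 0 < d) (hD : 0 < D)
    (L : ℝ) (hL : 0 ≤ L) (f : (Fin d → ℝ) → (Fin D → ℝ))
    (hf : LipschitzWith (Real.toNNReal L) f) :
    ∃ C : ℕ, 0 < C ∧
      ∀ n : ℕ, 0 < n →
        ∃ Φ : Fin D → ((Fin (d + 1) → ℝ) → (Fin (d + 1) → ℝ)),
          (∀ i : Fin D,
            (∃ K : NNReal, LipschitzWith K (Φ i)) ∧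
            ∃ depth width params : ℕ,
              MLPRep relu depth width params (d + 1) (d + 1) (Φ i) ∧
              width ≤ C * d * n ^ (d + 1) ∧
              depth ≤ C * (Nat.clog 2 d + 1) ∧
              params ≤ C * d * n ^ (d + 1)) ∧
          ∃ ψ : Fin D → ((Fin (d + 1) → ℝ) → (Fin (d + 1) → ℝ)),
            (∀ i : Fin D, IsTime1Flow (Φ i) (ψ i)) ∧
            (∃ K : NNReal,
              LipschitzWith K (fun (x : Fin d → ℝ) (i : Fin D) => lastProj (ψ i (liftEmb x)))) ∧
            ∀ x ∈ cube01 d,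
              ‖f x - fun i : Fin D => lastProj (ψ i (liftEmb x))‖ ≤ (C : ℝ) / n := by
  classical
  refine ⟨(d+3) + Nat.ceil L + (2^(d+2) * ((d+1) + (d+1)*(2*d+4) + (d+2)) + 2) + 2^(d+2),
    Nat.lt_of_lt_of_le (by omega : 0 < d+3)
      (le_trans (Nat.le_add_right _ _)
        (le_trans (Nat.le_add_right _ _) (Nat.le_add_right _ _))), ?_⟩
  set K1 : ℕ := (d+1) + (d+1)*(2*d+4) + (d+2) with hK1
  set C : ℕ := (d+3) + Nat.ceil L + (2^(d+2) * K1 + 2) + 2^(d+2) with hCdef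
  intro n hn
  have hn1 : 1 ≤ n := hn
  set c : Fin D → (Fin d → Fin (n+1)) → ℝ := fun i q => f (fun j => (q j : ℝ)/n) i with hc
  -- arithmetic facts
  obtain ⟨M, hM⟩ : ∃ M, d * n^(d+1) = M := ⟨_, rfl⟩
  have hpow1 : (n+1)^d ≤ 2^d * n^d := by
    calc (n+1)^d ≤ (2*n)^d := Nat.pow_le_pow_left (by omega) d
      _ = 2^d * n^d := mul_pow 2 n d
  have hpow2 : n^d ≤ n^(d+1) := Nat.pow_le_pow_right hn1 (Nat.le_succ d)
  have hNb : NF.bigN d n ≤ 2^(d+2) * M := by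
    rw [NF.bigN_eq, ← hM]
    calc (n+1)^d * (4*d) ≤ (2^d * n^d) * (4*d) := Nat.mul_le_mul_right _ hpow1
      _ = (2^d * 4) * (d * n^d) := by ring
      _ = 2^(d+2) * (d * n^d) := by rw [show (2:ℕ)^(d+2) = 2^d * 4 from by
            rw [pow_succ, pow_succ]; ring]
      _ ≤ 2^(d+2) * (d * n^(d+1)) :=
          Nat.mul_le_mul_left _ (Nat.mul_le_mul_left _ hpow2)
  have hMd : d ≤ M := by
    rw [← hM]
    exact Nat.le_mul_of_pos_right d (Nat.pow_pos hn)
  have hCM : 2^(d+2) ≤ C := by rw [hCdef]; exact Nat.le_add_left _ _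
  have hwidth : NF.bigN d n ≤ C * d * n^(d+1) := by
    rw [mul_assoc, hM]
    calc NF.bigN d n ≤ 2^(d+2) * M := hNb
      _ ≤ C * M := Nat.mul_le_mul_right _ hCM
  have hdC : d + 3 ≤ C := by
    rw [hCdef]
    calc d+3 ≤ (d+3) + Nat.ceil L := Nat.le_add_right _ _
      _ ≤ (d+3) + Nat.ceil L + (2^(d+2) * K1 + 2) := Nat.le_add_right _ _
      _ ≤ (d+3) + Nat.ceil L + (2^(d+2) * K1 + 2) + 2^(d+2) := Nat.le_add_right _ _
  have hdepth : (d+1)+2 ≤ C * (Nat.clog 2 d + 1) := by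
    calc (d+1)+2 = d+3 := by omega
      _ ≤ C := hdC
      _ = C * 1 := (mul_one C).symm
      _ ≤ C * (Nat.clog 2 d + 1) := Nat.mul_le_mul_left C (by omega)
  have hparams : ∀ i : Fin D,
      (nnzM (NF.WoutM d n (c i)) + nnzV (NF.bout0 d))
        + (∑ k ∈ Finset.range (d+1), (nnzM (NF.WM d n k) + nnzV (NF.bM d n k)))
        + (nnzM (NF.WinM d n) + nnzV (NF.binM d n)) ≤ C * d * n^(d+1) := by
    intro i
    have hP := NF.params_le (c i)
    have hB : ((d+1) * (NF.bigN d n) + (d+1))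
        + ((d+1) * ((NF.bigN d n)*(2*d+3) + (NF.bigN d n)))
        + ((NF.bigN d n)*(d+1) + (NF.bigN d n)) = (NF.bigN d n) * K1 + (d+1) := by
      rw [hK1]; ring
    have h1 : (NF.bigN d n) * K1 ≤ (2^(d+2) * M) * K1 := Nat.mul_le_mul_right _ hNb
    have h2 : (d+1) ≤ 2 * M := by
      have : d + 1 ≤ 2 * d := by omega
      have h2d : 2 * d ≤ 2 * M := Nat.mul_le_mul_left 2 hMd
      omega
    have h3 : (2^(d+2) * M) * K1 + 2 * M = (2^(d+2) * K1 + 2) * M := by ring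
    have h4 : (2^(d+2) * K1 + 2) ≤ C := by
      rw [hCdef]
      calc 2^(d+2) * K1 + 2 ≤ (d+3) + Nat.ceil L + (2^(d+2) * K1 + 2) := Nat.le_add_left _ _
        _ ≤ (d+3) + Nat.ceil L + (2^(d+2) * K1 + 2) + 2^(d+2) := Nat.le_add_right _ _
    calc _ ≤ _ := hP
      _ = (NF.bigN d n) * K1 + (d+1) := hB
      _ ≤ (2^(d+2) * M) * K1 + 2 * M := add_le_add h1 h2
      _ = (2^(d+2) * K1 + 2) * M := h3
      _ ≤ C * M := Nat.mul_le_mul_right _ h4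
      _ = C * d * n^(d+1) := by rw [mul_assoc, hM]
  refine ⟨fun i => NF.netFun d n (c i), ?_, ?_⟩
  · intro i
    refine ⟨NF.MLPRep.lipschitz NF.lipschitz_relu (NF.netMLP (c i)), ?_⟩
    exact ⟨(d+1)+2, NF.bigN d n, _, NF.netMLP (c i), hwidth, hdepth, hparams i⟩
  · refine ⟨fun i z => z + NF.netFun d n (c i) z, ?_, ?_, ?_⟩
    · intro i z
      refine ⟨fun t => z + t • NF.netFun d n (c i) z, by simp, ?_, by simp⟩
      intro t
      show HasDerivAt (fun t => z + t • NF.netFun d n (c i) z)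
        (NF.netFun d n (c i) (z + t • NF.netFun d n (c i) z)) t
      have hfix : NF.netFun d n (c i) (z + t • NF.netFun d n (c i) z)
          = NF.netFun d n (c i) z := by
        apply NF.netFun_ext hd
        intro j
        have := NF.netFun_castSucc hd (c i) z j
        simp [this]
      rw [hfix]
      simpa using ((hasDerivAt_id t).smul_const (NF.netFun d n (c i) z)).const_add z
    · -- Lipschitz of the readout map
      have hlip : ∀ i : Fin D, ∃ K : NNReal,
          LipschitzWith K (NF.netFun d n (c i)) :=
        fun i => NF.MLPRep.lipschitz NF.lipschitz_relu (NF.netMLP (c i))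
      choose K hK using hlip
      refine ⟨1 * ((1 + Finset.univ.sup K) * 1), ?_⟩
      apply NF.lippi
      intro i
      have h1 : LipschitzWith (1 + Finset.univ.sup K)
          (fun z : Fin (d+1) → ℝ => z + NF.netFun d n (c i) z) :=
        LipschitzWith.id.add ((hK i).weaken (Finset.le_sup (Finset.mem_univ i)))
      exact (NF.lip_eval (Fin.last d)).comp (h1.comp NF.lip_liftEmb)
    · intro x hx
      have hxI : ∀ j : Fin d, x j ∈ Set.Icc (0:ℝ) 1 := by
        intro j
        exact hx j (Set.mem_univ j)
      set xe : Fin (d+1) → ℝ := liftEmb x with hxe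
      have hxec : ∀ j : Fin d, xe (Fin.castSucc j) = x j := by
        intro j
        rw [hxe, liftEmb, Fin.snoc_castSucc]
      have hxecc : ∀ j : Fin d, xe (Fin.castSucc j) ∈ Set.Icc (0:ℝ) 1 := by
        intro j; rw [hxec j]; exact hxI j
      have hpart := NF.hat_partition (n := n) hd xe hxecc
      have hCL : (L : ℝ) ≤ (C : ℝ) := by
        calc L ≤ (Nat.ceil L : ℝ) := Nat.le_ceil L
          _ ≤ (C : ℝ) := by
              have hle : Nat.ceil L ≤ C := by
                rw [hCdef]
                calc Nat.ceil L ≤ (d+3) + Nat.ceil L := Nat.le_add_left _ _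
                  _ ≤ (d+3) + Nat.ceil L + (2^(d+2) * K1 + 2) := Nat.le_add_right _ _
                  _ ≤ (d+3) + Nat.ceil L + (2^(d+2) * K1 + 2) + 2^(d+2) := Nat.le_add_right _ _
              exact_mod_cast Nat.cast_le.2 hle
      have hnR : (0:ℝ) < n := by exact_mod_cast hn
      have hval : ∀ i : Fin D,
          lastProj ((fun z => z + NF.netFun d n (c i) z) (liftEmb x))
            = ∑ q, c i q * NF.hatq d n q xe := by
        intro i
        show (liftEmb x + NF.netFun d n (c i) (liftEmb x)) (Fin.last d) = _
        rw [Pi.add_apply, show liftEmb x (Fin.last d) = 0 from Fin.snoc_last _ _,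
          ← hxe, NF.netFun_last hd, zero_add]
      rw [pi_norm_le_iff_of_nonneg (by positivity)]
      intro i
      rw [Pi.sub_apply, Real.norm_eq_abs, hval i]
      have hterm : ∀ q : Fin d → Fin (n+1),
          |f x i - c i q| * NF.hatq d n q xe ≤ (L/n) * NF.hatq d n q xe := by
        intro q
        by_cases hq : NF.hatq d n q xe = 0
        · rw [hq, mul_zero, mul_zero]
        · apply mul_le_mul_of_nonneg_right _ (NF.hat_nonneg q xe)
          have hclose : dist x (fun j => (q j : ℝ)/n) ≤ 1/n := by
            rw [dist_pi_le_iff (by positivity)]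
            intro j
            rw [Real.dist_eq, ← hxec j]
            exact NF.hat_close hn q xe hq j
          have hdist : dist (f x) (f (fun j => (q j : ℝ)/n)) ≤ L * (1/n) := by
            calc dist (f x) (f (fun j => (q j : ℝ)/n))
                ≤ (Real.toNNReal L : ℝ) * dist x (fun j => (q j : ℝ)/n) :=
                  hf.dist_le_mul _ _
              _ = L * dist x (fun j => (q j : ℝ)/n) := by
                  rw [Real.coe_toNNReal L hL]
              _ ≤ L * (1/n) := by
                  apply mul_le_mul_of_nonneg_left hclose hL
          calc |f x i - c i q| = dist (f x i) (f (fun j => (q j : ℝ)/n) i) := by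
                rw [hc, Real.dist_eq]
            _ ≤ dist (f x) (f (fun j => (q j : ℝ)/n)) := dist_le_pi_dist _ _ i
            _ ≤ L * (1/n) := hdist
            _ = L/n := by ring
      calc |f x i - ∑ q, c i q * NF.hatq d n q xe|
          = |∑ q, (f x i - c i q) * NF.hatq d n q xe| := by
            congr 1
            rw [Finset.sum_congr rfl (fun q _ => sub_mul (f x i) (c i q) (NF.hatq d n q xe)),
              Finset.sum_sub_distrib, ← Finset.mul_sum, hpart, mul_one]
        _ ≤ ∑ q, |(f x i - c i q) * NF.hatq d n q xe| := Finset.abs_sum_le_sum_abs _ _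
        _ = ∑ q, |f x i - c i q| * NF.hatq d n q xe := by
            apply Finset.sum_congr rfl
            intro q _
            rw [abs_mul, abs_of_nonneg (NF.hat_nonneg q xe)]
        _ ≤ ∑ q, (L/n) * NF.hatq d n q xe := Finset.sum_le_sum (fun q _ => hterm q)
        _ = (L/n) * ∑ q, NF.hatq d n q xe := (Finset.mul_sum _ _ _).symm
        _ = L/n := by rw [hpart, mul_one]
        _ ≤ (C:ℝ)/n := by
            gcongr
end
end

section
/- Let d, D ∈ ℕ₊. The set of all maps [0,1]^d → ℝ^D of the form x ↦ π(Flow(V_f)(ι(x))), where f : ℝ^d → ℝ^D is a ReLU MLP of arbitrary depth and width, V_f : ℝ^{d+D} → ℝ^{d+D} is the vector field V_f(x,y) = (0, f(x)), ι(x) = (x,0), and π(x,y) = y, is dense in C([0,1]^d, ℝ^D) with the uniform norm. -/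
open Metric Set Function Filter Topology

noncomputable section

/-- The lifted vector field `V_f(x, y) = (0, f x)` on `ℝ^d × ℝ^D`. -/
def liftedVF {d D : ℕ} (f : (Fin d → ℝ) → (Fin D → ℝ)) :
    (Fin d → ℝ) × (Fin D → ℝ) → (Fin d → ℝ) × (Fin D → ℝ) :=
  fun p => (0, f p.1)

/-!
The flow of `V_f(x, y) = (0, f x)` is `(x, y) ↦ (x, y + f x)`, so the maps in question are
exactly the restrictions of ReLU MLPs to the cube. ReLU MLPs are closed under composition and,
because `t = relu t - relu (-t)` lets a hidden layer carry its input through unchanged, under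
stacking, hence under `+`, `⊔` and `⊓`. The scalar ones thus restrict to a sublattice of
`C(K, ℝ)` that contains the affine functions, which separate points strongly, so the lattice
version of Stone–Weierstrass makes it dense; vector-valued targets are approximated coordinatewise.
-/

open Matrix

section FinAppend

variable {R M N : Type*} [Semiring R] [AddCommMonoid M] [Module R M] [AddCommMonoid N] [Module R N]
  {a b : ℕ}

def LinearMap.finAppend (l₁ : N →ₗ[R] Fin a → M) (l₂ : N →ₗ[R] Fin b → M) :
    N →ₗ[R] Fin (a + b) → M where
  toFun z := Fin.append (l₁ z) (l₂ z)
  map_add' x y := by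
    ext i; refine Fin.addCases (fun i => ?_) (fun i => ?_) i <;> simp
  map_smul' c x := by
    ext i; refine Fin.addCases (fun i => ?_) (fun i => ?_) i <;> simp

@[simp]
theorem LinearMap.finAppend_apply (l₁ : N →ₗ[R] Fin a → M) (l₂ : N →ₗ[R] Fin b → M) (z : N) :
    LinearMap.finAppend l₁ l₂ z = Fin.append (l₁ z) (l₂ z) :=
  rfl

end FinAppend

section Closure

variable {σ : ℝ → ℝ} {n m r : ℕ}

theorem isMLP_affine (W : Matrix (Fin m) (Fin n) ℝ) (b : Fin m → ℝ) :
    IsMLP σ fun x => W *ᵥ x + b :=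
  ⟨_, _, _, .affine W b⟩

theorem isMLP_linear_add (l : (Fin n → ℝ) →ₗ[ℝ] Fin m → ℝ) (c : Fin m → ℝ) :
    IsMLP σ fun x => l x + c := by
  simpa using isMLP_affine (σ := σ) (LinearMap.toMatrix' l) c

theorem isMLP_linear (l : (Fin n → ℝ) →ₗ[ℝ] Fin m → ℝ) : IsMLP σ l := by
  simpa using isMLP_linear_add (σ := σ) l 0

theorem isMLP_const (c : Fin m → ℝ) : IsMLP σ fun _ : Fin n → ℝ => c := by
  simpa using isMLP_linear_add (σ := σ) (0 : (Fin n → ℝ) →ₗ[ℝ] Fin m → ℝ) c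

theorem IsMLP.comp_layer {f : (Fin m → ℝ) → Fin r → ℝ} (hf : IsMLP σ f)
    (W : Matrix (Fin m) (Fin n) ℝ) (b : Fin m → ℝ) :
    IsMLP σ fun x => f fun i => σ ((W *ᵥ x + b) i) :=
  let ⟨_, _, _, hf⟩ := hf
  ⟨_, _, _, .layer W b hf⟩

theorem IsMLP.comp_affine {f : (Fin m → ℝ) → Fin r → ℝ} (hf : IsMLP σ f)
    (A : Matrix (Fin m) (Fin n) ℝ) (c : Fin m → ℝ) : IsMLP σ fun x => f (A *ᵥ x + c) := by
  obtain ⟨_, _, _, hf⟩ := hf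
  cases hf with
  | affine W b =>
    simpa [mulVec_add, mulVec_mulVec, add_assoc] using isMLP_affine (σ := σ) (W * A) (W *ᵥ c + b)
  | layer W b hf =>
    simpa [mulVec_add, mulVec_mulVec, add_assoc] using
      IsMLP.comp_layer ⟨_, _, _, hf⟩ (W * A) (W *ᵥ c + b)

theorem IsMLP.comp {g : (Fin n → ℝ) → Fin m → ℝ} {f : (Fin m → ℝ) → Fin r → ℝ}
    (hf : IsMLP σ f) (hg : IsMLP σ g) : IsMLP σ (f ∘ g) := by
  obtain ⟨_, _, _, hg⟩ := hg
  induction hg with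
  | affine W b => exact hf.comp_affine W b
  | layer W b _ ih => exact (ih hf).comp_layer W b

theorem IsMLP.neg {f : (Fin n → ℝ) → Fin m → ℝ} (hf : IsMLP σ f) : IsMLP σ (-f) :=
  (isMLP_linear (-LinearMap.id)).comp hf

theorem MLPRep.continuous (hσ : Continuous σ) {depth width params : ℕ}
    {f : (Fin n → ℝ) → Fin m → ℝ} (hf : MLPRep σ depth width params n m f) : Continuous f := by
  induction hf with
  | affine W b => exact (continuous_const.matrix_mulVec continuous_id).add continuous_const
  | layer W b _ ih =>
    exact ih.comp <| continuous_pi fun i => hσ.comp <| (continuous_apply i).comp <|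
      (continuous_const.matrix_mulVec continuous_id).add continuous_const

theorem IsMLP.continuous (hσ : Continuous σ) {f : (Fin n → ℝ) → Fin m → ℝ} (hf : IsMLP σ f) :
    Continuous f :=
  let ⟨_, _, _, hf⟩ := hf
  hf.continuous hσ

end Closure

section ReLU

variable {n m r : ℕ}

theorem continuous_relu : Continuous relu :=
  continuous_id.max continuous_const

theorem relu_sub_relu_neg (a : ℝ) : relu a - relu (-a) = a :=
  max_zero_sub_max_neg_zero_eq_self a

theorem max_eq_add_relu_sub (a b : ℝ) : max a b = b + relu (a - b) := by
  rcases le_total a b with h | h <;> simp [relu, h]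

theorem min_eq_sub_relu_sub (a b : ℝ) : min a b = a - relu (a - b) := by
  rcases le_total a b with h | h <;> simp [relu, h]

theorem IsMLP.append_id {f : (Fin n → ℝ) → Fin m → ℝ} (hf : IsMLP relu f) (c : ℕ) :
    IsMLP relu fun z : Fin (n + c) → ℝ =>
      Fin.append (f fun j => z (Fin.castAdd c j)) fun j => z (Fin.natAdd n j) := by
  obtain ⟨_, _, _, hf⟩ := hf
  induction hf generalizing c with
  | @affine n m W b =>
    convert isMLP_linear_add (σ := relu)
      (.finAppend (W.mulVecLin ∘ₗ .funLeft ℝ ℝ (Fin.castAdd c)) (.funLeft ℝ ℝ (Fin.natAdd n)))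
      (Fin.append b 0) using 2 with z
    ext i; refine Fin.addCases (fun i => ?_) (fun i => ?_) i <;>
      simp [LinearMap.funLeft, Function.comp_def]
  | @layer n k m _ _ _ W b f' _ ih =>
    -- The hidden layer computes `(W z₁ + b, z₂, -z₂)`; `P` recovers `z₂ = relu z₂ - relu (-z₂)`.
    let Q : (Fin (n + c) → ℝ) →ₗ[ℝ] Fin (k + (c + c)) → ℝ :=
      .finAppend (W.mulVecLin ∘ₗ .funLeft ℝ ℝ (Fin.castAdd c))
        (.finAppend (.funLeft ℝ ℝ (Fin.natAdd n)) (-.funLeft ℝ ℝ (Fin.natAdd n)))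
    let P : (Fin (m + (c + c)) → ℝ) →ₗ[ℝ] Fin (m + c) → ℝ :=
      .finAppend (.funLeft ℝ ℝ (Fin.castAdd (c + c)))
        (.funLeft ℝ ℝ (Fin.natAdd m ∘ Fin.castAdd c) - .funLeft ℝ ℝ (Fin.natAdd m ∘ Fin.natAdd c))
    convert ((isMLP_linear P).comp (ih (c + c))).comp_layer (LinearMap.toMatrix' Q)
      (Fin.append b 0) using 2 with z
    ext i; refine Fin.addCases (fun i => ?_) (fun i => ?_) i <;>
      simp [Q, P, LinearMap.funLeft, Function.comp_def, -Fin.natAdd_eq_addNat, relu_sub_relu_neg]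

theorem IsMLP.append {f : (Fin n → ℝ) → Fin m → ℝ} {g : (Fin n → ℝ) → Fin r → ℝ}
    (hf : IsMLP relu f) (hg : IsMLP relu g) : IsMLP relu fun x => Fin.append (f x) (g x) := by
  -- `x ↦ (x, x) ↦ (f x, x) ↦ (x, f x) ↦ (g x, f x) ↦ (f x, g x)`
  have dup := isMLP_linear (σ := relu)
    (.finAppend .id .id : (Fin n → ℝ) →ₗ[ℝ] Fin (n + n) → ℝ)
  have swap a b := isMLP_linear (σ := relu)
    (.finAppend (.funLeft ℝ ℝ (Fin.natAdd a)) (.funLeft ℝ ℝ (Fin.castAdd b)) :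
      (Fin (a + b) → ℝ) →ₗ[ℝ] Fin (b + a) → ℝ)
  convert (swap _ _).comp ((hg.append_id m).comp ((swap _ _).comp ((hf.append_id n).comp dup)))
    using 2 with x
  ext i; refine Fin.addCases (fun i => ?_) (fun i => ?_) i <;> simp [-Fin.natAdd_eq_addNat]

theorem IsMLP.add {f g : (Fin n → ℝ) → Fin m → ℝ} (hf : IsMLP relu f) (hg : IsMLP relu g) :
    IsMLP relu (f + g) := by
  convert (isMLP_linear (.funLeft ℝ ℝ (Fin.castAdd m) + .funLeft ℝ ℝ (Fin.natAdd m))).comp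
    (hf.append hg) using 1
  ext x i; simp [-Fin.natAdd_eq_addNat]

theorem IsMLP.sub {f g : (Fin n → ℝ) → Fin m → ℝ} (hf : IsMLP relu f) (hg : IsMLP relu g) :
    IsMLP relu (f - g) := by
  simpa [sub_eq_add_neg] using hf.add hg.neg

theorem IsMLP.relu_comp {f : (Fin n → ℝ) → Fin m → ℝ} (hf : IsMLP relu f) :
    IsMLP relu fun x i => relu (f x i) := by
  have hrelu : IsMLP relu fun u : Fin m → ℝ => fun i => relu (u i) := by
    simpa using
      (isMLP_linear (σ := relu) LinearMap.id).comp_layer (1 : Matrix (Fin m) (Fin m) ℝ) 0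
  exact hrelu.comp hf

theorem IsMLP.sup {f g : (Fin n → ℝ) → Fin m → ℝ} (hf : IsMLP relu f) (hg : IsMLP relu g) :
    IsMLP relu (f ⊔ g) := by
  convert hg.add (hf.sub hg).relu_comp using 1
  ext x i; simp [max_eq_add_relu_sub]

theorem IsMLP.inf {f g : (Fin n → ℝ) → Fin m → ℝ} (hf : IsMLP relu f) (hg : IsMLP relu g) :
    IsMLP relu (f ⊓ g) := by
  convert hf.sub (hf.sub hg).relu_comp using 1
  ext x i; simp [min_eq_sub_relu_sub]

theorem isMLP_pi {f : Fin m → (Fin n → ℝ) → Fin 1 → ℝ} (hf : ∀ i, IsMLP relu (f i)) :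
    IsMLP relu fun x i => f i x 0 := by
  induction m with
  | zero => convert isMLP_const (σ := relu) (n := n) (0 : Fin 0 → ℝ) using 2
  | succ m ih =>
    convert (ih fun i => hf i.castSucc).append (hf (Fin.last m)) using 2 with x
    rw [Fin.append_right_eq_snoc]
    exact (Fin.snoc_init_self _).symm

end ReLU

theorem exists_isMLP_interpolate {σ : ℝ → ℝ} {d : ℕ} {x y : Fin d → ℝ} (hxy : x ≠ y) (a b : ℝ) :
    ∃ f : (Fin d → ℝ) → Fin 1 → ℝ, IsMLP σ f ∧ f x 0 = a ∧ f y 0 = b := by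
  obtain ⟨i, hi⟩ := Function.ne_iff.mp hxy
  have hi' : y i - x i ≠ 0 := sub_ne_zero.mpr (Ne.symm hi)
  set s := (b - a) / (y i - x i)
  refine ⟨_, isMLP_linear_add (.pi fun _ => s • .proj i) fun _ => a - s * x i, ?_, ?_⟩
  · simp
  · change s * y i + (a - s * x i) = b
    rw [show s * y i + (a - s * x i) = s * (y i - x i) + a by ring, div_mul_cancel₀ _ hi']
    ring

section Approximation

variable {d : ℕ} (K : Set (Fin d → ℝ)) [CompactSpace K]

theorem dense_setOf_isMLP_scalar :
    Dense {h : C(K, ℝ) | ∃ f : (Fin d → ℝ) → Fin 1 → ℝ, IsMLP relu f ∧ ∀ x : K, h x = f x 0} := by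
  rw [dense_iff_closure_eq]
  apply ContinuousMap.sublattice_closure_eq_top
  · exact ⟨0, fun _ => 0, isMLP_const 0, fun _ => rfl⟩
  · rintro h₁ ⟨f₁, hf₁, hh₁⟩ h₂ ⟨f₂, hf₂, hh₂⟩
    exact ⟨f₁ ⊓ f₂, hf₁.inf hf₂, fun x => by simp [hh₁, hh₂]⟩
  · rintro h₁ ⟨f₁, hf₁, hh₁⟩ h₂ ⟨f₂, hf₂, hh₂⟩
    exact ⟨f₁ ⊔ f₂, hf₁.sup hf₂, fun x => by simp [hh₁, hh₂]⟩
  · intro v x y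
    obtain rfl | hxy := eq_or_ne x y
    · exact ⟨.const K (v x), ⟨fun _ _ => v x, isMLP_const _, fun _ => rfl⟩, rfl, rfl⟩
    obtain ⟨f, hf, hfx, hfy⟩ :=
      exists_isMLP_interpolate (σ := relu) (Subtype.coe_injective.ne hxy) (v x) (v y)
    have hfc : Continuous fun z : K => f z 0 :=
      (continuous_apply 0).comp ((hf.continuous continuous_relu).comp continuous_subtype_val)
    exact ⟨⟨_, hfc⟩, ⟨f, hf, fun _ => rfl⟩, hfx, hfy⟩

theorem dense_setOf_isMLP {D : ℕ} :
    Dense {h : C(K, Fin D → ℝ) |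
      ∃ f : (Fin d → ℝ) → Fin D → ℝ, IsMLP relu f ∧ ∀ x : K, h x = f x} := by
  refine Metric.dense_iff.mpr fun g ε hε => ?_
  have hcoord (i : Fin D) := Metric.dense_iff.mp (dense_setOf_isMLP_scalar K)
    ((ContinuousMap.eval i).comp g) ε hε
  choose h hh f hf hfh using hcoord
  have hF := isMLP_pi hf
  refine ⟨⟨_, (hF.continuous continuous_relu).comp continuous_subtype_val⟩,
    ?_, _, hF, fun _ => rfl⟩
  rw [Metric.mem_ball, ContinuousMap.dist_lt_iff hε]
  refine fun x => (dist_pi_lt_iff hε).mpr fun i => ?_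
  have := (ContinuousMap.dist_apply_le_dist x).trans_lt (Metric.mem_ball.mp (hh i))
  simpa [hfh] using this

end Approximation

theorem isTime1Flow_liftedVF {d D : ℕ} (f : (Fin d → ℝ) → Fin D → ℝ) :
    IsTime1Flow (liftedVF f) fun p => (p.1, p.2 + f p.1) := fun p =>
  ⟨fun t => (p.1, p.2 + t • f p.1), by simp,
    fun t => (hasDerivAt_const t p.1).prodMk <| by
      simpa using ((hasDerivAt_id t).smul_const (f p.1)).const_add p.2,
    by simp⟩

theorem lifted_flow_universal_approximation_general (d D : ℕ) :
    Dense {g : C(cube01 d, Fin D → ℝ) |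
      ∃ f : (Fin d → ℝ) → (Fin D → ℝ), IsMLP relu f ∧
        ∃ φ : (Fin d → ℝ) × (Fin D → ℝ) → (Fin d → ℝ) × (Fin D → ℝ),
          IsTime1Flow (liftedVF f) φ ∧
          ∀ x : cube01 d, g x = (φ ((x : Fin d → ℝ), 0)).2} := by
  have : CompactSpace (cube01 d) :=
    isCompact_iff_compactSpace.mp (isCompact_univ_pi fun _ => isCompact_Icc)
  refine (dense_setOf_isMLP (cube01 d)).mono ?_
  rintro g ⟨f, hf, hgf⟩
  exact ⟨f, hf, _, isTime1Flow_liftedVF f, fun x => by simp [hgf]⟩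

/-- **Statement 10.** The set of maps `[0,1]^d → ℝ^D` of the form `x ↦ π (Flow(V_f) (ι x))`,
with `f` a ReLU MLP, `ι x = (x, 0)` and `π (x, y) = y`, is dense in `C([0,1]^d, ℝ^D)` with the
uniform topology. -/
theorem lifted_flow_universal_approximation (d D : ℕ) (hd : 0 < d) (hD : 0 < D) :
    Dense {g : C(cube01 d, Fin D → ℝ) |
      ∃ f : (Fin d → ℝ) → (Fin D → ℝ), IsMLP relu f ∧
        ∃ φ : (Fin d → ℝ) × (Fin D → ℝ) → (Fin d → ℝ) × (Fin D → ℝ),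
          IsTime1Flow (liftedVF f) φ ∧
          ∀ x : cube01 d, g x = (φ ((x : Fin d → ℝ), 0)).2} :=
  lifted_flow_universal_approximation_general d D
end
end

section
/- Let d, D ∈ ℕ₊, L ≥ 0, and let f : ℝ^d → ℝ^D be L-Lipschitz. Define the vector field V_f : ℝ^{d+D} → ℝ^{d+D} by V_f(x,y) = (0, f(x)). Then V_f is max(1, L)-Lipschitz, the solution of the autonomous ODE governed by V_f with initial condition (x, y) is the curve t ↦ (x, y + t f(x)), so the time-1 flow satisfies Flow(V_f)(x,y) = (x, y + f(x)); in particular, with ι(x) = (x, 0) and π(x,y) = y, one has π(Flow(V_f)(ι(x))) = f(x) for every x ∈ ℝ^d. -/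
/-! Since the `x`-component of `V_f` vanishes, along any solution the `x`-coordinate stays
frozen, so the `y`-coordinate moves with the constant velocity `f x`; integrating from `0` to `1`
gives `(x, y + f x)`. The Lipschitz bound is inherited from `f` through `p ↦ p.1`. -/

open Metric Set Function Filter Topology

noncomputable section

theorem eq_add_smul_of_hasDerivAt_const {E : Type*} [NormedAddCommGroup E] [NormedSpace ℝ E]
    {γ : ℝ → E} {v : E} (hγ : ∀ t, HasDerivAt γ v t) (t : ℝ) : γ t = γ 0 + t • v := by
  have hzero : ∀ s, HasDerivAt (fun s => γ s - s • v) 0 s := fun s => by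
    simpa using (hγ s).fun_sub ((hasDerivAt_id s).smul_const v)
  have hconst := is_const_of_deriv_eq_zero (fun s => (hzero s).differentiableAt)
    (fun s => (hzero s).deriv) t 0
  simp only [zero_smul, sub_zero] at hconst
  rw [← hconst, sub_add_cancel]

section liftedVF

variable {d D : ℕ} {f : (Fin d → ℝ) → (Fin D → ℝ)}

theorem lipschitzWith_liftedVF {K : NNReal} (hf : LipschitzWith K f) :
    LipschitzWith K (liftedVF f) := by
  unfold liftedVF
  simpa using (LipschitzWith.const (α := (Fin d → ℝ) × (Fin D → ℝ)) (0 : Fin d → ℝ)).prodMk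
    (hf.comp LipschitzWith.prod_fst)

theorem hasDerivAt_liftedVF_curve (x : Fin d → ℝ) (y : Fin D → ℝ) (t : ℝ) :
    HasDerivAt (fun t : ℝ => ((x, y + t • f x) : (Fin d → ℝ) × (Fin D → ℝ)))
      (liftedVF f (x, y + t • f x)) t :=
  (hasDerivAt_const t x).prodMk (((hasDerivAt_id t).smul_const (f x)).const_add y |>.congr_deriv
    (one_smul ℝ _))

theorem eq_of_hasDerivAt_liftedVF {γ : ℝ → (Fin d → ℝ) × (Fin D → ℝ)} {x : Fin d → ℝ}
    {y : Fin D → ℝ} (hγ0 : γ 0 = (x, y)) (hγ : ∀ t, HasDerivAt γ (liftedVF f (γ t)) t)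
    (t : ℝ) : γ t = (x, y + t • f x) := by
  have hfst_deriv : ∀ s, HasDerivAt (fun s => (γ s).1) 0 s := fun s => by
    simpa [liftedVF, Function.comp_def] using hasFDerivAt_fst.comp_hasDerivAt s (hγ s)
  have hfst : ∀ s, (γ s).1 = x := fun s => by
    simpa [hγ0] using eq_add_smul_of_hasDerivAt_const hfst_deriv s
  have hsnd : ∀ s, HasDerivAt (fun s => (γ s).2) (f x) s := fun s => by
    simpa [liftedVF, Function.comp_def, hfst] using hasFDerivAt_snd.comp_hasDerivAt s (hγ s)
  ext1
  · exact hfst t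
  · simpa [hγ0] using eq_add_smul_of_hasDerivAt_const hsnd t

theorem IsTime1Flow.liftedVF_apply {φ : (Fin d → ℝ) × (Fin D → ℝ) → (Fin d → ℝ) × (Fin D → ℝ)}
    (hφ : IsTime1Flow (liftedVF f) φ) (x : Fin d → ℝ) (y : Fin D → ℝ) :
    φ (x, y) = (x, y + f x) := by
  obtain ⟨γ, hγ0, hγ, hγ1⟩ := hφ (x, y)
  simpa [hγ1] using eq_of_hasDerivAt_liftedVF hγ0 hγ 1

end liftedVF

theorem lifted_vector_field_flow_general (d D : ℕ)
    (L : ℝ) (f : (Fin d → ℝ) → (Fin D → ℝ))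
    (hf : LipschitzWith (Real.toNNReal L) f) :
    LipschitzWith (max 1 (Real.toNNReal L)) (liftedVF f) ∧
    (∀ x : Fin d → ℝ, ∀ y : Fin D → ℝ,
      (fun t : ℝ => ((x, y + t • f x) : (Fin d → ℝ) × (Fin D → ℝ))) 0 = (x, y) ∧
      ∀ t : ℝ, HasDerivAt (fun t : ℝ => ((x, y + t • f x) : (Fin d → ℝ) × (Fin D → ℝ)))
        (liftedVF f (x, y + t • f x)) t) ∧
    ∀ φ : (Fin d → ℝ) × (Fin D → ℝ) → (Fin d → ℝ) × (Fin D → ℝ),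
      IsTime1Flow (liftedVF f) φ →
        (∀ x y, φ (x, y) = (x, y + f x)) ∧ ∀ x, (φ (x, 0)).2 = f x := by
  refine ⟨(lipschitzWith_liftedVF hf).weaken (le_max_right _ _),
    fun x y => ⟨by simp, hasDerivAt_liftedVF_curve x y⟩, fun φ hφ => ⟨hφ.liftedVF_apply, ?_⟩⟩
  intro x
  simp [hφ.liftedVF_apply x 0]

/-- **Statement 19.** For `L`-Lipschitz `f : ℝ^d → ℝ^D`, the lifted vector field
`V_f(x,y) = (0, f x)` is `max(1, L)`-Lipschitz, the solution of the ODE governed by `V_f`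
starting at `(x, y)` is `t ↦ (x, y + t • f x)`, hence the time-1 flow satisfies
`Flow(V_f)(x,y) = (x, y + f x)`; in particular `π (Flow(V_f) (ι x)) = f x`. -/
theorem lifted_vector_field_flow (d D : ℕ) (hd : 0 < d) (hD : 0 < D)
    (L : ℝ) (hL : 0 ≤ L) (f : (Fin d → ℝ) → (Fin D → ℝ))
    (hf : LipschitzWith (Real.toNNReal L) f) :
    LipschitzWith (max 1 (Real.toNNReal L)) (liftedVF f) ∧
    (∀ x : Fin d → ℝ, ∀ y : Fin D → ℝ,
      (fun t : ℝ => ((x, y + t • f x) : (Fin d → ℝ) × (Fin D → ℝ))) 0 = (x, y) ∧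
      ∀ t : ℝ, HasDerivAt (fun t : ℝ => ((x, y + t • f x) : (Fin d → ℝ) × (Fin D → ℝ)))
        (liftedVF f (x, y + t • f x)) t) ∧
    ∀ φ : (Fin d → ℝ) × (Fin D → ℝ) → (Fin d → ℝ) × (Fin D → ℝ),
      IsTime1Flow (liftedVF f) φ →
        (∀ x y, φ (x, y) = (x, y + f x)) ∧ ∀ x, (φ (x, 0)).2 = f x :=
  lifted_vector_field_flow_general d D L f hf
end
end
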